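/- arXiv:1501.06599 — 7 statements merged into one kernel-verified Lean document; each statement's English description precedes it below -/
import Mathlib

section
/- Let ψ : Ĩ → I be a continuously differentiable bijection from an interval Ĩ ⊆ ℝ onto I with ψ′ > 0 on Ĩ (one-sided derivatives at endpoints contained in Ĩ). Define gauge functions on Ĩ by w̃_0 := w_0 ∘ ψ and w̃_j := (w_j ∘ ψ)·ψ′ for j ≥ 1, and let the classes L̃^j and the generalized derivatives on Ĩ be defined with respect to w̃ = (w̃_0, w̃_1, …) exactly as L^j and the generalized derivatives on I are defined with respect to w. Then for every integer j ≥ 0: (I) for every f ∈ L^j (on I, w.r.t. w), the function f ∘ ψ belongs to L̃^j and (f ∘ ψ)^{(j)} = f^{(j)} ∘ ψ; (II) the map f ↦ f ∘ ψ from L^j to L̃^j is a bijection. -/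
open MeasureTheory Set Filter
open scoped ENNReal

noncomputable section

/-- `g` is right-continuous at every point of `I` that is not the greatest point of `I`,
and left-continuous at the greatest point of `I` when the latter exists (the class `LD`). -/
def IsLD (I : Set ℝ) (g : ℝ → ℝ) : Prop :=
  (∀ x ∈ I, (∃ y ∈ I, x < y) → Tendsto g (nhdsWithin x (I ∩ Ioi x)) (nhds (g x))) ∧
  (∀ x ∈ I, (∀ y ∈ I, y ≤ x) → Tendsto g (nhdsWithin x (I ∩ Iio x)) (nhds (g x)))

/-- `d 0, …, d n` is the system of generalized derivatives of `f` on `I` with respect to the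
gauge sequence `w`; i.e., `f ∈ L^n` with `f^{(j)} = d j` for `j = 0, …, n`. -/
structure IsGenL (I : Set ℝ) (w : ℕ → ℝ → ℝ) (n : ℕ) (f : ℝ → ℝ) (d : ℕ → ℝ → ℝ) : Prop where
  base : ∀ x ∈ I, f x = d 0 x * w 0 x
  ld : IsLD I (d n)
  integrable : ∀ j < n, ∀ z ∈ I, ∀ x ∈ I,
    IntervalIntegrable (fun u => d (j + 1) u * w (j + 1) u) volume z x
  deriv_eq : ∀ j < n, ∀ z ∈ I, ∀ x ∈ I,
    d j x = d j z + ∫ u in z..x, d (j + 1) u * w (j + 1) u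

/-- `f ∈ F_+^{k:n}(I)` (with derivative system `d`): all the generalized derivatives
`f^{(j)} = d j` of orders `j = k-1, …, n` are nondecreasing on `I`. -/
def MemF (I : Set ℝ) (w : ℕ → ℝ → ℝ) (k n : ℕ) (f : ℝ → ℝ) (d : ℕ → ℝ → ℝ) : Prop :=
  IsGenL I w n f d ∧ ∀ j, k - 1 ≤ j → j ≤ n → MonotoneOn (d j) I

/-- `w` is a sequence of positive, Borel-measurable, locally bounded gauge functions on `I`. -/
def IsGauge (I : Set ℝ) (w : ℕ → ℝ → ℝ) : Prop :=
  ∀ j, (∀ x ∈ I, 0 < w j x) ∧ Measurable (fun x : I => w j x) ∧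
    ∀ K ⊆ I, IsCompact K → ∃ C, ∀ x ∈ K, |w j x| ≤ C

def pAux (w : ℕ → ℝ → ℝ) (t : ℝ) (m : ℕ) : ℕ → ℝ → ℝ
  | 0 => w m
  | (i + 1) => fun x => w (m - (i + 1)) x * ∫ u in t..x, pAux w t m i u

/-- The `w`-polynomial `p_{t;j,m}` (for `t ∈ I`). -/
def pfun (w : ℕ → ℝ → ℝ) (t : ℝ) (j m : ℕ) : ℝ → ℝ := pAux w t m (m - j)

/-- The "positive part" `p^+_{t;j,m}`. -/
def pplus (w : ℕ → ℝ → ℝ) (t : ℝ) (j m : ℕ) : ℝ → ℝ := fun x =>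
  if t ≤ x then pfun w t j m x else 0

def pAuxE (w : ℕ → ℝ → ℝ) (I : Set ℝ) (m : ℕ) : ℕ → ℝ → ℝ≥0∞
  | 0 => fun x => ENNReal.ofReal (w m x)
  | (i + 1) => fun x =>
      ENNReal.ofReal (w (m - (i + 1)) x) * ∫⁻ u in I ∩ Iio x, pAuxE w I m i u

/-- `p_{a;j,m} : I → [0, ∞]`, where `a` is the left endpoint of `I` (the integrals from `a`
are taken over `(a, x) ∩ I = I ∩ Iio x`). -/
def pE (w : ℕ → ℝ → ℝ) (I : Set ℝ) (j m : ℕ) : ℝ → ℝ≥0∞ := pAuxE w I m (m - j)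

/-- The filter of `x ↓ a` within `I`, `a` being the left endpoint of `I`. -/
def leftEndFilter (I : Set ℝ) : Filter ℝ := ⨅ c ∈ I, Filter.principal (I ∩ Iic c)

/-- `ν(f) = ∫_I f dν ∈ [−∞, ∞]`. -/
def nuEval (ν : Measure ℝ) (I : Set ℝ) (f : ℝ → ℝ) : EReal :=
  ((∫⁻ x in I, ENNReal.ofReal (f x) ∂ν : ℝ≥0∞) : EReal)
    - ((∫⁻ x in I, ENNReal.ofReal (-f x) ∂ν : ℝ≥0∞) : EReal)

/-- The expectation `E g ∈ [−∞, ∞]` (in the extended sense). -/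
def eval' {α : Type*} [MeasurableSpace α] (P : Measure α) (g : α → ℝ) : EReal :=
  ((∫⁻ a, ENNReal.ofReal (g a) ∂P : ℝ≥0∞) : EReal)
    - ((∫⁻ a, ENNReal.ofReal (-g a) ∂P : ℝ≥0∞) : EReal)


section InvarAux

open MeasureTheory Set intervalIntegral

variable {It I : Set ℝ} {ψ ψ' : ℝ → ℝ}

lemma invar_contOn (hdiff : ∀ x ∈ It, HasDerivWithinAt ψ (ψ' x) It x) :
    ContinuousOn ψ It := fun x hx => (hdiff x hx).continuousWithinAt

lemma invar_mono (hIt : It.OrdConnected)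
    (hdiff : ∀ x ∈ It, HasDerivWithinAt ψ (ψ' x) It x)
    (hpos : ∀ x ∈ It, 0 < ψ' x) : StrictMonoOn ψ It :=
  strictMonoOn_of_hasDerivWithinAt_pos hIt.convex (invar_contOn hdiff)
    (fun x hx => (hdiff x (interior_subset hx)).mono interior_subset)
    (fun x hx => hpos x (interior_subset hx))

lemma invar_image (hIt : It.OrdConnected)
    (hdiff : ∀ x ∈ It, HasDerivWithinAt ψ (ψ' x) It x)
    (hpos : ∀ x ∈ It, 0 < ψ' x) {z x : ℝ}
    (hz : z ∈ It) (hx : x ∈ It) (hzx : z ≤ x) :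
    ψ '' Ioc z x = Ioc (ψ z) (ψ x) := by
  have hmono := invar_mono hIt hdiff hpos
  have hsub : Icc z x ⊆ It := hIt.out hz hx
  ext v
  constructor
  · rintro ⟨u, hu, rfl⟩
    exact ⟨hmono hz (hsub ⟨hu.1.le, hu.2⟩) hu.1,
      hmono.monotoneOn (hsub ⟨hu.1.le, hu.2⟩) hx hu.2⟩
  · intro hv
    have hIcc : Icc (ψ z) (ψ x) ⊆ ψ '' Icc z x :=
      intermediate_value_Icc hzx ((invar_contOn hdiff).mono hsub)
    obtain ⟨u, hu, huv⟩ := hIcc ⟨hv.1.le, hv.2⟩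
    refine ⟨u, ⟨?_, hu.2⟩, huv⟩
    rcases hu.1.lt_or_eq with h | h
    · exact h
    · exact absurd (h ▸ huv).symm hv.1.ne'

/-- Core substitution: set-integral and integrability transfer over `Ioc`. -/
lemma invar_subst (hIt : It.OrdConnected)
    (hdiff : ∀ x ∈ It, HasDerivWithinAt ψ (ψ' x) It x)
    (hpos : ∀ x ∈ It, 0 < ψ' x) {z x : ℝ}
    (hz : z ∈ It) (hx : x ∈ It) (hzx : z ≤ x) (g : ℝ → ℝ) :
    ((∫ v in Ioc (ψ z) (ψ x), g v) = ∫ u in Ioc z x, ψ' u * g (ψ u)) ∧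
    (IntegrableOn g (Ioc (ψ z) (ψ x)) ↔
      IntegrableOn (fun u => ψ' u * g (ψ u)) (Ioc z x)) := by
  have hsub : Icc z x ⊆ It := hIt.out hz hx
  have hsub' : Ioc z x ⊆ It := fun u hu => hsub ⟨hu.1.le, hu.2⟩
  have hder : ∀ u ∈ Ioc z x, HasDerivWithinAt ψ (ψ' u) (Ioc z x) u :=
    fun u hu => (hdiff u (hsub' hu)).mono hsub'
  have hinj : InjOn ψ (Ioc z x) := ((invar_mono hIt hdiff hpos).injOn).mono hsub'
  have himg := invar_image hIt hdiff hpos hz hx hzx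
  have hcongr : EqOn (fun u => |ψ' u| • g (ψ u)) (fun u => ψ' u * g (ψ u)) (Ioc z x) := by
    intro u hu
    simp only [abs_of_pos (hpos u (hsub' hu)), smul_eq_mul]
  constructor
  · rw [← himg, integral_image_eq_integral_abs_deriv_smul measurableSet_Ioc hder hinj]
    exact setIntegral_congr_fun measurableSet_Ioc hcongr
  · rw [← himg, integrableOn_image_iff_integrableOn_abs_deriv_smul measurableSet_Ioc hder hinj]
    exact ⟨fun h => (integrableOn_congr_fun hcongr measurableSet_Ioc).mp h,
      fun h => (integrableOn_congr_fun hcongr measurableSet_Ioc).mpr h⟩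

/-- Interval-integral version, arbitrary endpoint order. -/
lemma invar_subst' (hIt : It.OrdConnected)
    (hdiff : ∀ x ∈ It, HasDerivWithinAt ψ (ψ' x) It x)
    (hpos : ∀ x ∈ It, 0 < ψ' x) {z x : ℝ}
    (hz : z ∈ It) (hx : x ∈ It) (g : ℝ → ℝ) :
    ((∫ u in z..x, ψ' u * g (ψ u)) = ∫ v in ψ z..ψ x, g v) ∧
    (IntervalIntegrable g volume (ψ z) (ψ x) ↔
      IntervalIntegrable (fun u => ψ' u * g (ψ u)) volume z x) := by
  have hmono := (invar_mono hIt hdiff hpos).monotoneOn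
  rcases le_total z x with hzx | hzx
  · obtain ⟨heq, hiff⟩ := invar_subst hIt hdiff hpos hz hx hzx g
    have hψ : ψ z ≤ ψ x := hmono hz hx hzx
    constructor
    · rw [integral_of_le hzx, integral_of_le hψ, heq]
    · rw [intervalIntegrable_iff, intervalIntegrable_iff, uIoc_of_le hψ, uIoc_of_le hzx]
      exact hiff
  · obtain ⟨heq, hiff⟩ := invar_subst hIt hdiff hpos hx hz hzx g
    have hψ : ψ x ≤ ψ z := hmono hx hz hzx
    constructor
    · rw [integral_symm x z, integral_symm (ψ x) (ψ z),
        integral_of_le hzx, integral_of_le hψ, heq]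
    · rw [intervalIntegrable_iff, intervalIntegrable_iff, uIoc_of_ge hψ, uIoc_of_ge hzx]
      exact hiff

end InvarAux

/-- Proposition `invar`: invariance of the classes `L^j` and of the
generalized derivatives under a (generally nonlinear) change of scale `ψ`. -/
theorem stmt_0 (I It : Set ℝ) (hI : I.OrdConnected) (hIne : ∃ p ∈ I, ∃ q ∈ I, p < q)
    (hIt : It.OrdConnected) (hItne : ∃ p ∈ It, ∃ q ∈ It, p < q)
    (w : ℕ → ℝ → ℝ) (hw : IsGauge I w)
    (ψ ψ' : ℝ → ℝ)
    (hdiff : ∀ x ∈ It, HasDerivWithinAt ψ (ψ' x) It x)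
    (hcont : ContinuousOn ψ' It)
    (hpos : ∀ x ∈ It, 0 < ψ' x)
    (hbij : Set.BijOn ψ It I)
    (wt : ℕ → ℝ → ℝ)
    (hwt0 : ∀ x ∈ It, wt 0 x = w 0 (ψ x))
    (hwtj : ∀ j, ∀ x ∈ It, wt (j + 1) x = w (j + 1) (ψ x) * ψ' x)
    (j : ℕ) :
    (∀ f d, IsGenL I w j f d →
        IsGenL It wt j (fun x => f (ψ x)) (fun i x => d i (ψ x))) ∧
    (∀ f₁ d₁ f₂ d₂, IsGenL I w j f₁ d₁ → IsGenL I w j f₂ d₂ →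
        (∀ x ∈ It, f₁ (ψ x) = f₂ (ψ x)) → ∀ y ∈ I, f₁ y = f₂ y) ∧
    (∀ g dg, IsGenL It wt j g dg →
        ∃ f d, IsGenL I w j f d ∧ ∀ x ∈ It, g x = f (ψ x)) := by
  classical
  have hcψ : ContinuousOn ψ It := invar_contOn hdiff
  have hmono : StrictMonoOn ψ It := invar_mono hIt hdiff hpos
  set φ : ℝ → ℝ := Function.invFunOn ψ It with hφdef
  have hφψ : ∀ u ∈ It, φ (ψ u) = u := fun u hu => hbij.injOn.leftInvOn_invFunOn hu
  have hψφ : ∀ v ∈ I, ψ (φ v) = v := fun v hv => hbij.surjOn.rightInvOn_invFunOn hv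
  have hφmem : ∀ v ∈ I, φ v ∈ It := fun v hv => hbij.surjOn.mapsTo_invFunOn hv
  have hφmono : StrictMonoOn φ I := by
    intro v₁ h₁ v₂ h₂ h
    by_contra hc
    push_neg at hc
    have h2 := hmono.monotoneOn (hφmem v₂ h₂) (hφmem v₁ h₁) hc
    rw [hψφ v₁ h₁, hψφ v₂ h₂] at h2
    exact absurd h (not_lt.2 h2)
  have hψtendR : ∀ x ∈ It,
      Tendsto ψ (nhdsWithin x (It ∩ Ioi x)) (nhdsWithin (ψ x) (I ∩ Ioi (ψ x))) := by
    intro x hx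
    exact ((hcψ x hx).mono inter_subset_left).tendsto_nhdsWithin
      (fun u hu => ⟨hbij.mapsTo hu.1, hmono hx hu.1 hu.2⟩)
  have hψtendL : ∀ x ∈ It,
      Tendsto ψ (nhdsWithin x (It ∩ Iio x)) (nhdsWithin (ψ x) (I ∩ Iio (ψ x))) := by
    intro x hx
    exact ((hcψ x hx).mono inter_subset_left).tendsto_nhdsWithin
      (fun u hu => ⟨hbij.mapsTo hu.1, hmono hu.1 hx hu.2⟩)
  have hφtendR : ∀ v ∈ I, (∃ v' ∈ I, v < v') →
      Tendsto φ (nhdsWithin v (I ∩ Ioi v)) (nhdsWithin (φ v) (It ∩ Ioi (φ v))) := by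
    intro v hv ⟨v', hv', hvv'⟩
    have hmem : ∀ᶠ u in nhdsWithin v (I ∩ Ioi v), u ∈ I ∩ Ioi v := eventually_mem_nhdsWithin
    apply tendsto_nhdsWithin_of_tendsto_nhds_of_eventually_within
    · rw [tendsto_order]
      constructor
      · intro b hb
        filter_upwards [hmem] with u hu
        exact hb.trans (hφmono hv hu.1 hu.2)
      · intro b hb
        have h1 : φ v < φ v' := hφmono hv hv' hvv'
        obtain ⟨x', hx'It, hx'1, hx'2⟩ : ∃ x', x' ∈ It ∧ φ v < x' ∧ x' < b := by
          rcases lt_or_ge (φ v') b with h | h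
          · exact ⟨φ v', hφmem v' hv', h1, h⟩
          · refine ⟨(φ v + b)/2, ?_, by linarith, by linarith⟩
            exact hIt.out (hφmem v hv) (hφmem v' hv') ⟨by linarith, by linarith⟩
        have hvψ : v < ψ x' := by
          have h2 := hmono (hφmem v hv) hx'It hx'1
          rwa [hψφ v hv] at h2
        filter_upwards [hmem, mem_nhdsWithin_of_mem_nhds (Iio_mem_nhds hvψ)] with u hu hu2
        have h3 : φ u < φ (ψ x') := hφmono hu.1 (hbij.mapsTo hx'It) hu2
        rw [hφψ x' hx'It] at h3
        exact h3.trans hx'2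
    · filter_upwards [hmem] with u hu
      exact ⟨hφmem u hu.1, hφmono hv hu.1 hu.2⟩
  have hφtendL : ∀ v ∈ I, (∃ v' ∈ I, v' < v) →
      Tendsto φ (nhdsWithin v (I ∩ Iio v)) (nhdsWithin (φ v) (It ∩ Iio (φ v))) := by
    intro v hv ⟨v', hv', hvv'⟩
    have hmem : ∀ᶠ u in nhdsWithin v (I ∩ Iio v), u ∈ I ∩ Iio v := eventually_mem_nhdsWithin
    apply tendsto_nhdsWithin_of_tendsto_nhds_of_eventually_within
    · rw [tendsto_order]
      constructor
      · intro b hb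
        have h1 : φ v' < φ v := hφmono hv' hv hvv'
        obtain ⟨x', hx'It, hx'1, hx'2⟩ : ∃ x', x' ∈ It ∧ b < x' ∧ x' < φ v := by
          rcases lt_or_ge b (φ v') with h | h
          · exact ⟨φ v', hφmem v' hv', h, h1⟩
          · refine ⟨(b + φ v)/2, ?_, by linarith, by linarith⟩
            exact hIt.out (hφmem v' hv') (hφmem v hv) ⟨by linarith, by linarith⟩
        have hvψ : ψ x' < v := by
          have h2 := hmono hx'It (hφmem v hv) hx'2
          rwa [hψφ v hv] at h2
        filter_upwards [hmem, mem_nhdsWithin_of_mem_nhds (Ioi_mem_nhds hvψ)] with u hu hu2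
        have h3 : φ (ψ x') < φ u := hφmono (hbij.mapsTo hx'It) hu.1 hu2
        rw [hφψ x' hx'It] at h3
        exact hx'1.trans h3
      · intro b hb
        filter_upwards [hmem] with u hu
        exact (hφmono hu.1 hv hu.2).trans hb
    · filter_upwards [hmem] with u hu
      exact ⟨hφmem u hu.1, hφmono hu.1 hv hu.2⟩
  refine ⟨?_, ?_, ?_⟩
  · -- forward direction
    intro f d hf
    refine ⟨?_, ⟨?_, ?_⟩, ?_, ?_⟩
    · intro x hx
      rw [hwt0 x hx]
      exact hf.base (ψ x) (hbij.mapsTo hx)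
    · rintro x hx ⟨y, hy, hxy⟩
      exact (hf.ld.1 (ψ x) (hbij.mapsTo hx)
        ⟨ψ y, hbij.mapsTo hy, hmono hx hy hxy⟩).comp (hψtendR x hx)
    · intro x hx hmax
      have hmax' : ∀ y ∈ I, y ≤ ψ x := by
        intro y hy
        obtain ⟨u, hu, rfl⟩ := hbij.surjOn hy
        exact hmono.monotoneOn hu hx (hmax u hu)
      exact (hf.ld.2 (ψ x) (hbij.mapsTo hx) hmax').comp (hψtendL x hx)
    · intro i hi z hz x hx
      have hint := hf.integrable i hi (ψ z) (hbij.mapsTo hz) (ψ x) (hbij.mapsTo hx)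
      have h2 := ((invar_subst' hIt hdiff hpos hz hx
        (fun v => d (i+1) v * w (i+1) v)).2).mp hint
      rw [intervalIntegrable_iff] at h2 ⊢
      refine (integrableOn_congr_fun ?_ measurableSet_uIoc).mpr h2
      intro u hu
      have huIt : u ∈ It := hIt.uIoc_subset hz hx hu
      simp only [hwtj i u huIt]; ring
    · intro i hi z hz x hx
      have hde := hf.deriv_eq i hi (ψ z) (hbij.mapsTo hz) (ψ x) (hbij.mapsTo hx)
      rw [hde]
      congr 1
      rw [← (invar_subst' hIt hdiff hpos hz hx (fun v => d (i+1) v * w (i+1) v)).1]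
      apply intervalIntegral.integral_congr
      intro u hu
      have huIt : u ∈ It := hIt.uIcc_subset hz hx hu
      simp only [hwtj i u huIt]; ring
  · -- injectivity
    intro f₁ d₁ f₂ d₂ _ _ h y hy
    obtain ⟨x, hx, rfl⟩ := hbij.surjOn hy
    exact h x hx
  · -- surjectivity
    intro g dg hg
    refine ⟨fun y => g (φ y), fun i y => dg i (φ y), ⟨?_, ⟨?_, ?_⟩, ?_, ?_⟩, ?_⟩
    · intro y hy
      have h1 := hg.base (φ y) (hφmem y hy)
      rw [h1, hwt0 (φ y) (hφmem y hy), hψφ y hy]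
    · rintro v hv ⟨v', hv', hvv'⟩
      exact (hg.ld.1 (φ v) (hφmem v hv)
        ⟨φ v', hφmem v' hv', hφmono hv hv' hvv'⟩).comp (hφtendR v hv ⟨v', hv', hvv'⟩)
    · intro v hv hmax
      have hmax' : ∀ y ∈ It, y ≤ φ v := by
        intro y hy
        by_contra hc
        push_neg at hc
        have h2 := hmono (hφmem v hv) hy hc
        rw [hψφ v hv] at h2
        exact absurd (hmax (ψ y) (hbij.mapsTo hy)) (not_le.2 h2)
      obtain ⟨p, hp, q, hq, hpq⟩ := hIne
      exact (hg.ld.2 (φ v) (hφmem v hv) hmax').comp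
        (hφtendL v hv ⟨p, hp, lt_of_lt_of_le hpq (hmax q hq)⟩)
    · intro i hi z' hz' x' hx'
      have hint := hg.integrable i hi (φ z') (hφmem _ hz') (φ x') (hφmem _ hx')
      have key : IntervalIntegrable
          (fun u => ψ' u * ((fun v => dg (i+1) (φ v) * w (i+1) v) (ψ u)))
          volume (φ z') (φ x') := by
        rw [intervalIntegrable_iff] at hint ⊢
        refine (integrableOn_congr_fun ?_ measurableSet_uIoc).mp hint
        intro u hu
        have huIt : u ∈ It := hIt.uIoc_subset (hφmem _ hz') (hφmem _ hx') hu
        simp only [hwtj i u huIt, hφψ u huIt]; ring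
      have h2 := ((invar_subst' hIt hdiff hpos (hφmem _ hz') (hφmem _ hx')
        (fun v => dg (i+1) (φ v) * w (i+1) v)).2).mpr key
      rwa [hψφ z' hz', hψφ x' hx'] at h2
    · intro i hi z' hz' x' hx'
      have hde := hg.deriv_eq i hi (φ z') (hφmem _ hz') (φ x') (hφmem _ hx')
      have heq : (∫ u in (φ z')..(φ x'), dg (i+1) u * wt (i+1) u)
          = ∫ v in z'..x', dg (i+1) (φ v) * w (i+1) v := by
        have h2 := (invar_subst' hIt hdiff hpos (hφmem _ hz') (hφmem _ hx')
          (fun v => dg (i+1) (φ v) * w (i+1) v)).1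
        rw [hψφ z' hz', hψφ x' hx'] at h2
        rw [← h2]
        apply intervalIntegral.integral_congr
        intro u hu
        have huIt : u ∈ It := hIt.uIcc_subset (hφmem _ hz') (hφmem _ hx') hu
        simp only [hwtj i u huIt, hφψ u huIt]; ring
      rw [hde, heq]
    · intro x hx
      show g x = g (φ (ψ x))
      rw [hφψ x hx]


end
end

section
/- Let z ∈ I, let k ≥ 0 be an integer, and let f, g ∈ L^k satisfy f^{(j)}(z) = g^{(j)}(z) for all j ∈ {0, …, k−1}. If f^{(k)} ≥ g^{(k)} on I ∩ [z, ∞), then f ≥ g on I ∩ [z, ∞). If f^{(k)} ≥ g^{(k)} on I ∩ (−∞, z], then (−1)^k (f − g) ≥ 0 on I ∩ (−∞, z]. -/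
open MeasureTheory Set Filter
open scoped ENNReal

noncomputable section

/-- Proposition `compar`: comparison of two functions given a comparison
of their `k`-th generalized derivatives and equal initial conditions at `z`. -/
theorem stmt_1 (I : Set ℝ) (hI : I.OrdConnected) (hIne : ∃ p ∈ I, ∃ q ∈ I, p < q)
    (w : ℕ → ℝ → ℝ) (hw : IsGauge I w)
    (k : ℕ) (z : ℝ) (hz : z ∈ I)
    (f g : ℝ → ℝ) (df dg : ℕ → ℝ → ℝ)
    (hf : IsGenL I w k f df) (hg : IsGenL I w k g dg)
    (hinit : ∀ j < k, df j z = dg j z) :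
    ((∀ x ∈ I, z ≤ x → dg k x ≤ df k x) → ∀ x ∈ I, z ≤ x → g x ≤ f x) ∧
    ((∀ x ∈ I, x ≤ z → dg k x ≤ df k x) →
      ∀ x ∈ I, x ≤ z → 0 ≤ (-1 : ℝ) ^ k * (f x - g x)) := by
  constructor
  · intro hk
    -- downward induction: for j with j + m = k, df j ≥ dg j on I ∩ [z, ∞)
    have key : ∀ m : ℕ, ∀ j : ℕ, j + m = k → ∀ x ∈ I, z ≤ x → dg j x ≤ df j x := by
      intro m
      induction m with
      | zero => intro j hj x hx hzx; simpa [← hj] using hk x hx hzx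
      | succ m ih =>
        intro j hj x hx hzx
        have hjk : j < k := by omega
        have hih : ∀ u ∈ I, z ≤ u → dg (j + 1) u ≤ df (j + 1) u := by
          intro u hu hzu; exact ih (j + 1) (by omega) u hu hzu
        have hfj := hf.deriv_eq j hjk z hz x hx
        have hgj := hg.deriv_eq j hjk z hz x hx
        have hint : 0 ≤ ∫ u in z..x,
            (df (j + 1) u * w (j + 1) u - dg (j + 1) u * w (j + 1) u) := by
          apply intervalIntegral.integral_nonneg hzx
          intro u hu
          have huI : u ∈ I := hI.out hz hx hu
          have hwpos := (hw (j + 1)).1 u huI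
          have := hih u huI hu.1
          nlinarith
        rw [intervalIntegral.integral_sub (hf.integrable j hjk z hz x hx)
          (hg.integrable j hjk z hz x hx)] at hint
        have hz0 := hinit j hjk
        rw [hfj, hgj, hz0]
        linarith
    intro x hx hzx
    have h0 : dg 0 x ≤ df 0 x := key k 0 (by omega) x hx hzx
    have hwpos := (hw 0).1 x hx
    rw [hf.base x hx, hg.base x hx]
    nlinarith
  · intro hk
    have key : ∀ m : ℕ, ∀ j : ℕ, j + m = k → ∀ x ∈ I, x ≤ z →
        0 ≤ (-1 : ℝ) ^ m * (df j x - dg j x) := by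
      intro m
      induction m with
      | zero =>
        intro j hj x hx hxz
        have := hk x hx hxz
        have hjk : j = k := by omega
        subst hjk
        simp only [pow_zero, one_mul]
        linarith
      | succ m ih =>
        intro j hj x hx hxz
        have hjk : j < k := by omega
        have hih : ∀ u ∈ I, u ≤ z →
            0 ≤ (-1 : ℝ) ^ m * (df (j + 1) u - dg (j + 1) u) := by
          intro u hu huz; exact ih (j + 1) (by omega) u hu huz
        have hfj := hf.deriv_eq j hjk z hz x hx
        have hgj := hg.deriv_eq j hjk z hz x hx
        have hint : 0 ≤ ∫ u in x..z, (-1 : ℝ) ^ m *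
            (df (j + 1) u * w (j + 1) u - dg (j + 1) u * w (j + 1) u) := by
          apply intervalIntegral.integral_nonneg hxz
          intro u hu
          have huI : u ∈ I := hI.out hx hz hu
          have hwpos := (hw (j + 1)).1 u huI
          have := hih u huI hu.2
          rcases Nat.even_or_odd m with he | ho
          · rw [he.neg_one_pow] at this ⊢; nlinarith
          · rw [ho.neg_one_pow] at this ⊢; nlinarith
        rw [intervalIntegral.integral_const_mul,
          intervalIntegral.integral_sub ((hf.integrable j hjk z hz x hx).symm)
          ((hg.integrable j hjk z hz x hx).symm)] at hint
        have hflip : (∫ u in x..z, df (j + 1) u * w (j + 1) u)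
            = -∫ u in z..x, df (j + 1) u * w (j + 1) u :=
          (intervalIntegral.integral_symm z x)
        have hflip' : (∫ u in x..z, dg (j + 1) u * w (j + 1) u)
            = -∫ u in z..x, dg (j + 1) u * w (j + 1) u :=
          (intervalIntegral.integral_symm z x)
        rw [hflip, hflip'] at hint
        have hz0 := hinit j hjk
        rw [hfj, hgj, hz0, pow_succ]
        nlinarith [hint]
    intro x hx hxz
    have h0 : 0 ≤ (-1 : ℝ) ^ k * (df 0 x - dg 0 x) := key k 0 (by omega) x hx hxz
    have hwpos := (hw 0).1 x hx
    rw [hf.base x hx, hg.base x hx]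
    rcases Nat.even_or_odd k with he | ho
    · rw [he.neg_one_pow] at h0 ⊢; nlinarith
    · rw [ho.neg_one_pow] at h0 ⊢; nlinarith

end
end

section
/- For every integer k ≥ 0, every z ∈ I, and every (c_0, …, c_k) ∈ ℝ^{k+1}, there exists a unique w-polynomial p ∈ P^{≤k} such that p^{(j)}(z) = c_j for all j ∈ {0, …, k}; moreover, this p is locally bounded on I and p/w_0 is continuous on I. -/
open MeasureTheory Set Filter
open scoped ENNReal

noncomputable section

/-!
Integrating downwards from the constant `p^{(k)} = c k`, each time taking the primitive that
vanishes at `z`, produces the derivatives of the required `w`-polynomial. Each of them is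
continuous on `I`, being a primitive of a continuous function times a measurable locally bounded
gauge, so every integrand is locally integrable and `p / w 0 = p^{(0)}` is continuous.
Uniqueness runs through the same downward induction: two derivative systems with constant top
derivative that agree at `z` have equal integrands at each level.
-/
open Topology

def IsLocallyBoundedOn (f : ℝ → ℝ) (I : Set ℝ) : Prop :=
  ∀ K ⊆ I, IsCompact K → ∃ C, ∀ x ∈ K, |f x| ≤ C

section LocallyBounded

variable {f g : ℝ → ℝ} {I : Set ℝ}

theorem ContinuousOn.isLocallyBoundedOn (hf : ContinuousOn f I) : IsLocallyBoundedOn f I :=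
  fun _K hKI hK => hK.exists_bound_of_continuousOn (hf.mono hKI)

theorem IsLocallyBoundedOn.mul (hf : IsLocallyBoundedOn f I) (hg : IsLocallyBoundedOn g I) :
    IsLocallyBoundedOn (fun x => f x * g x) I := by
  intro K hKI hK
  obtain ⟨C, hC⟩ := hf K hKI hK
  obtain ⟨D, hD⟩ := hg K hKI hK
  refine ⟨C * D, fun x hx => ?_⟩
  rw [abs_mul]
  exact mul_le_mul (hC x hx) (hD x hx) (abs_nonneg _) ((abs_nonneg _).trans (hC x hx))

theorem IsLocallyBoundedOn.intervalIntegrable (hI : I.OrdConnected)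
    (hm : AEStronglyMeasurable f (volume.restrict I)) (hf : IsLocallyBoundedOn f I)
    {a b : ℝ} (ha : a ∈ I) (hb : b ∈ I) : IntervalIntegrable f volume a b := by
  have hab : uIcc a b ⊆ I := hI.uIcc_subset ha hb
  obtain ⟨C, hC⟩ := hf _ hab isCompact_uIcc
  rw [intervalIntegrable_iff]
  refine IntegrableOn.of_bound measure_Ioc_lt_top (hm.mono_set (uIoc_subset_uIcc.trans hab)) C ?_
  filter_upwards [ae_restrict_mem measurableSet_uIoc] with x hx
  exact hC x (uIoc_subset_uIcc hx)

end LocallyBounded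

theorem exists_Icc_mem_nhdsWithin {s : Set ℝ} {x : ℝ} (hx : x ∈ s) :
    ∃ a ∈ s, ∃ b ∈ s, Icc a b ∈ 𝓝[s] x := by
  obtain ⟨a, ha, hxa⟩ : ∃ a ∈ s, ∀ᶠ y in 𝓝[s] x, a ≤ y := by
    by_cases h : ∃ a ∈ s, a < x
    · obtain ⟨a, ha, hax⟩ := h
      exact ⟨a, ha, (eventually_nhdsWithin_of_eventually_nhds (eventually_gt_nhds hax)).mono
        fun _ => le_of_lt⟩
    · push Not at h
      exact ⟨x, hx, eventually_mem_nhdsWithin.mono h⟩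
  obtain ⟨b, hb, hxb⟩ : ∃ b ∈ s, ∀ᶠ y in 𝓝[s] x, y ≤ b := by
    by_cases h : ∃ b ∈ s, x < b
    · obtain ⟨b, hb, hxb⟩ := h
      exact ⟨b, hb, (eventually_nhdsWithin_of_eventually_nhds (eventually_lt_nhds hxb)).mono
        fun _ => le_of_lt⟩
    · push Not at h
      exact ⟨x, hx, eventually_mem_nhdsWithin.mono h⟩
  exact ⟨a, ha, b, hb, hxa.and hxb⟩

theorem continuousOn_of_forall_continuousOn_inter_Icc {s : Set ℝ} {f : ℝ → ℝ}
    (h : ∀ a ∈ s, ∀ b ∈ s, ContinuousOn f (s ∩ Icc a b)) : ContinuousOn f s := by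
  intro x hx
  obtain ⟨a, ha, b, hb, hab⟩ := exists_Icc_mem_nhdsWithin hx
  have hnhds : s ∩ Icc a b ∈ 𝓝[s] x := inter_mem self_mem_nhdsWithin hab
  exact (h a ha b hb x (mem_of_mem_nhdsWithin hx hnhds)).mono_of_mem_nhdsWithin hnhds

theorem continuousOn_primitive_of_forall_intervalIntegrable {s : Set ℝ} {f : ℝ → ℝ} {z : ℝ}
    (hf : ∀ a ∈ s, ∀ b ∈ s, IntervalIntegrable f volume a b) (hz : z ∈ s) :
    ContinuousOn (fun x => ∫ u in z..x, f u) s := by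
  refine continuousOn_of_forall_continuousOn_inter_Icc fun a ha b hb => ?_
  have hprim := intervalIntegral.continuousOn_primitive_interval' (hf a ha b hb) left_mem_uIcc
  refine ((continuousOn_const (c := ∫ u in z..a, f u)).add hprim).mono
    (inter_subset_right.trans Icc_subset_uIcc) |>.congr fun x hx => ?_
  exact (intervalIntegral.integral_add_adjacent_intervals (hf z hz a ha) (hf a ha x hx.1)).symm

theorem IsGauge.aestronglyMeasurable {I : Set ℝ} {w : ℕ → ℝ → ℝ} (hw : IsGauge I w)
    (hI : MeasurableSet I) (j : ℕ) : AEStronglyMeasurable (w j) (volume.restrict I) :=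
  ((aemeasurable_restrict_iff_comap_subtype hI).2 (hw j).2.1.aemeasurable).aestronglyMeasurable

theorem ContinuousOn.intervalIntegrable_mul_gauge {I : Set ℝ} {w : ℕ → ℝ → ℝ} {g : ℝ → ℝ}
    (hg : ContinuousOn g I) (hI : I.OrdConnected) (hw : IsGauge I w) (j : ℕ) {a b : ℝ}
    (ha : a ∈ I) (hb : b ∈ I) : IntervalIntegrable (fun u => g u * w j u) volume a b :=
  ((hg.isLocallyBoundedOn).mul (hw j).2.2).intervalIntegrable hI
    ((hg.aestronglyMeasurable hI.measurableSet).mul (hw.aestronglyMeasurable hI.measurableSet j))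
    ha hb

theorem isLD_of_eqOn_const {I : Set ℝ} {g : ℝ → ℝ} {a : ℝ} (hg : ∀ x ∈ I, g x = a) :
    IsLD I g := by
  have hconst : ∀ x ∈ I, ∀ s ⊆ I, Tendsto g (𝓝[s] x) (𝓝 (g x)) := fun x hx s hs => by
    rw [hg x hx]
    exact tendsto_const_nhds.congr'
      (eventually_nhdsWithin_of_forall fun y hy => (hg y (hs hy)).symm)
  exact ⟨fun x hx _ => hconst x hx _ inter_subset_left,
    fun x hx _ => hconst x hx _ inter_subset_left⟩

/-- `p^{(j)}` for the `w`-polynomial `p ∈ P^{≤k}` with `p^{(j)}(z) = c j`; meaningful only for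
`j ≤ k`. -/
def interpDeriv (w : ℕ → ℝ → ℝ) (k : ℕ) (z : ℝ) (c : ℕ → ℝ) (j : ℕ) (x : ℝ) : ℝ :=
  if j < k then c j + ∫ u in z..x, interpDeriv w k z c (j + 1) u * w (j + 1) u else c j
termination_by k - j

section interpDeriv

variable {w : ℕ → ℝ → ℝ} {k : ℕ} {z : ℝ} {c : ℕ → ℝ}

theorem interpDeriv_of_lt {j : ℕ} (hj : j < k) (x : ℝ) :
    interpDeriv w k z c j x =
      c j + ∫ u in z..x, interpDeriv w k z c (j + 1) u * w (j + 1) u := by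
  rw [interpDeriv, if_pos hj]

theorem interpDeriv_of_le {j : ℕ} (hj : k ≤ j) (x : ℝ) : interpDeriv w k z c j x = c j := by
  rw [interpDeriv, if_neg hj.not_gt]

theorem interpDeriv_apply_self (j : ℕ) : interpDeriv w k z c j z = c j := by
  rw [interpDeriv]
  split_ifs
  · rw [intervalIntegral.integral_same, add_zero]
  · rfl

theorem continuousOn_interpDeriv {I : Set ℝ} (hI : I.OrdConnected) (hw : IsGauge I w)
    (hz : z ∈ I) (j : ℕ) : ContinuousOn (interpDeriv w k z c j) I := by
  by_cases hj : j < k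
  · have hnext := continuousOn_interpDeriv hI hw hz (j + 1)
    rw [funext (interpDeriv_of_lt hj)]
    exact continuousOn_const.add <| continuousOn_primitive_of_forall_intervalIntegrable
      (fun a ha b hb => hnext.intervalIntegrable_mul_gauge hI hw (j + 1) ha hb) hz
  · rw [funext (interpDeriv_of_le (not_lt.1 hj))]
    exact continuousOn_const
termination_by k - j

theorem isGenL_interpDeriv {I : Set ℝ} (hI : I.OrdConnected) (hw : IsGauge I w) (hz : z ∈ I) :
    IsGenL I w k (fun x => interpDeriv w k z c 0 x * w 0 x) (interpDeriv w k z c) where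
  base _ _ := rfl
  ld := isLD_of_eqOn_const fun x _ => interpDeriv_of_le le_rfl x
  integrable j _ _ ha _ hb :=
    (continuousOn_interpDeriv hI hw hz (j + 1)).intervalIntegrable_mul_gauge hI hw (j + 1) ha hb
  deriv_eq j hj a ha x hx := by
    rw [interpDeriv_of_lt hj, interpDeriv_of_lt hj, add_assoc,
      intervalIntegral.integral_add_adjacent_intervals] <;>
    exact (continuousOn_interpDeriv hI hw hz (j + 1)).intervalIntegrable_mul_gauge hI hw (j + 1)
      ‹_› ‹_›

end interpDeriv

theorem IsGenL.eqOn_deriv_of_eq_at {I : Set ℝ} {w : ℕ → ℝ → ℝ} {k : ℕ} {p q : ℝ → ℝ}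
    {dp dq : ℕ → ℝ → ℝ} {z : ℝ} (hI : I.OrdConnected) (hz : z ∈ I)
    (hp : IsGenL I w k p dp) (hq : IsGenL I w k q dq)
    (hpk : ∃ a, ∀ x ∈ I, dp k x = a) (hqk : ∃ a, ∀ x ∈ I, dq k x = a)
    (hpq : ∀ j ≤ k, dp j z = dq j z) (j : ℕ) (hj : j ≤ k) : EqOn (dp j) (dq j) I := by
  intro x hx
  rcases hj.lt_or_eq with hj | rfl
  · have hnext := hp.eqOn_deriv_of_eq_at hI hz hq hpk hqk hpq (j + 1) hj
    rw [hp.deriv_eq j hj z hz x hx, hq.deriv_eq j hj z hz x hx, hpq j hj.le]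
    congr 1
    refine intervalIntegral.integral_congr fun u hu => ?_
    simp only [hnext (hI.uIcc_subset hz hx hu)]
  · obtain ⟨a, ha⟩ := hpk
    obtain ⟨b, hb⟩ := hqk
    rw [ha x hx, hb x hx, ← ha z hz, ← hb z hz, hpq j le_rfl]
termination_by k - j

theorem stmt_2_general (I : Set ℝ) (hI : I.OrdConnected)
    (w : ℕ → ℝ → ℝ) (hw : IsGauge I w)
    (k : ℕ) (z : ℝ) (hz : z ∈ I) (c : ℕ → ℝ) :
    ∃ p : ℝ → ℝ, ∃ dp : ℕ → ℝ → ℝ,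
      IsGenL I w k p dp ∧ (∃ c', ∀ x ∈ I, dp k x = c') ∧ (∀ j ≤ k, dp j z = c j) ∧
      (∀ K ⊆ I, IsCompact K → ∃ C, ∀ x ∈ K, |p x| ≤ C) ∧
      ContinuousOn (fun x => p x / w 0 x) I ∧
      (∀ q dq, IsGenL I w k q dq → (∃ c', ∀ x ∈ I, dq k x = c') →
        (∀ j ≤ k, dq j z = c j) → ∀ x ∈ I, q x = p x) := by
  have hp := isGenL_interpDeriv (k := k) (c := c) hI hw hz
  have hpk : ∃ a, ∀ x ∈ I, interpDeriv w k z c k x = a :=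
    ⟨c k, fun x _ => interpDeriv_of_le le_rfl x⟩
  have hcont := continuousOn_interpDeriv (k := k) (c := c) hI hw hz 0
  refine ⟨_, _, hp, hpk, fun j _ => interpDeriv_apply_self j,
    hcont.isLocallyBoundedOn.mul (hw 0).2.2,
    hcont.congr fun x hx => mul_div_cancel_right₀ _ ((hw 0).1 x hx).ne', ?_⟩
  intro q dq hq hqk hqz x hx
  rw [hq.base x hx, hq.eqOn_deriv_of_eq_at hI hz hp hqk hpk
    (fun j hj => (hqz j hj).trans (interpDeriv_apply_self j).symm) 0 k.zero_le hx]

/-- Proposition `interp`: interpolation/tangency property of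
`w`-polynomials: unique `p ∈ P^{≤k}` with prescribed generalized derivatives at `z`;
moreover `p` is locally bounded and `p/w₀` is continuous on `I`. -/
theorem stmt_2 (I : Set ℝ) (hI : I.OrdConnected) (hIne : ∃ p ∈ I, ∃ q ∈ I, p < q)
    (w : ℕ → ℝ → ℝ) (hw : IsGauge I w)
    (k : ℕ) (z : ℝ) (hz : z ∈ I) (c : ℕ → ℝ) :
    ∃ p : ℝ → ℝ, ∃ dp : ℕ → ℝ → ℝ,
      IsGenL I w k p dp ∧ (∃ c', ∀ x ∈ I, dp k x = c') ∧ (∀ j ≤ k, dp j z = c j) ∧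
      (∀ K ⊆ I, IsCompact K → ∃ C, ∀ x ∈ K, |p x| ≤ C) ∧
      ContinuousOn (fun x => p x / w 0 x) I ∧
      (∀ q dq, IsGenL I w k q dq → (∃ c', ∀ x ∈ I, dq k x = c') →
        (∀ j ≤ k, dq j z = c j) → ∀ x ∈ I, q x = p x) :=
  stmt_2_general I hI w hw k z hz c

end
end

section
/- Suppose a ∉ I (in particular, a = −∞ is allowed). Then for every integer j ≥ 0 and every set M ⊆ {j+1, j+2, …} there exists a sequence w = (w_0, w_1, …) of positive, Borel-measurable, locally bounded functions on I such that, with the functions p_{a;j,m} defined from this w, one has {m ≥ j+1 : p_{a;j,m}(x) < ∞ for all x ∈ I} = M. -/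
open MeasureTheory Set Filter
open scoped ENNReal

noncomputable section

/-! Take `g > 0` with `G(x) = ∫_a^x g < ∞` and `h ≤ g / G` with `∫_a^x h = ∞`
(`g = 1`, `h = 1 / (x - a)` for finite `a`; `g = eˣ`, `h = 1` for `a = -∞`), and put `w_i = g`
for `i ∈ M`, `w_i = h` otherwise. If `w_m = h`, the innermost integral `∫_a^x w_m` is already
infinite everywhere, and the divergence propagates outwards. If `w_m = g`, every gauge satisfies
`w_i G ≤ g (1 + G)`, which gives `p_{a;m-i,m} ≤ (1 + G)^i g` by induction on `i`. -/

def leftLIntegral (I : Set ℝ) (f : ℝ → ℝ) (x : ℝ) : ℝ≥0∞ :=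
  ∫⁻ u in I ∩ Iio x, ENNReal.ofReal (f u)

section PAuxE

variable {I : Set ℝ} {w : ℕ → ℝ → ℝ} {m : ℕ}

lemma pAuxE_succ_eq_top (hI : MeasurableSet I) (hw : ∀ i, ∀ x ∈ I, 0 < w i x)
    (hvol : ∀ x ∈ I, volume (I ∩ Iio x) ≠ 0) (hdiv : ∀ x ∈ I, leftLIntegral I (w m) x = ⊤)
    (i : ℕ) : ∀ x ∈ I, pAuxE w I m (i + 1) x = ⊤ := by
  induction i with
  | zero =>
    intro x hx
    exact (congrArg _ (hdiv x hx)).trans (ENNReal.mul_top (ENNReal.ofReal_pos.2 (hw _ x hx)).ne')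
  | succ i ih =>
    intro x hx
    have hinner : ∫⁻ u in I ∩ Iio x, pAuxE w I m (i + 1) u = ⊤ := by
      rw [setLIntegral_congr_fun (hI.inter measurableSet_Iio) fun u hu => ih u hu.1,
        setLIntegral_const]
      exact ENNReal.top_mul (hvol x hx)
    exact (congrArg _ hinner).trans (ENNReal.mul_top (ENNReal.ofReal_pos.2 (hw _ x hx)).ne')

lemma pAuxE_le_one_add_pow_mul (hI : MeasurableSet I) {g : ℝ → ℝ}
    (hg : ∀ x ∈ I, leftLIntegral I g x ≠ ⊤)
    (hw : ∀ i, ∀ x ∈ I, ENNReal.ofReal (w i x) * leftLIntegral I g x ≤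
      ENNReal.ofReal (g x) * (1 + leftLIntegral I g x))
    (hm : ∀ x ∈ I, w m x ≤ g x) (i : ℕ) :
    ∀ x ∈ I, pAuxE w I m i x ≤ (1 + leftLIntegral I g x) ^ i * ENNReal.ofReal (g x) := by
  induction i with
  | zero =>
    intro x hx
    rw [pow_zero, one_mul]
    exact ENNReal.ofReal_le_ofReal (hm x hx)
  | succ i ih =>
    intro x hx
    set G := leftLIntegral I g
    have hinner : ∫⁻ u in I ∩ Iio x, pAuxE w I m i u ≤ (1 + G x) ^ i * G x :=
      calc ∫⁻ u in I ∩ Iio x, pAuxE w I m i u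
          ≤ ∫⁻ u in I ∩ Iio x, (1 + G x) ^ i * ENNReal.ofReal (g u) := by
            refine setLIntegral_mono' (hI.inter measurableSet_Iio) fun u hu => ?_
            have hGu : G u ≤ G x :=
              lintegral_mono_set (inter_subset_inter_right _ (Iio_subset_Iio hu.2.le))
            exact (ih u hu.1).trans (by gcongr)
        _ = (1 + G x) ^ i * G x := lintegral_const_mul' _ _
            (ENNReal.pow_ne_top (ENNReal.add_ne_top.2 ⟨ENNReal.one_ne_top, hg x hx⟩))
    calc pAuxE w I m (i + 1) x
        = ENNReal.ofReal (w (m - (i + 1)) x) * ∫⁻ u in I ∩ Iio x, pAuxE w I m i u := rfl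
      _ ≤ ENNReal.ofReal (w (m - (i + 1)) x) * ((1 + G x) ^ i * G x) := by gcongr
      _ = (1 + G x) ^ i * (ENNReal.ofReal (w (m - (i + 1)) x) * G x) := by ring
      _ ≤ (1 + G x) ^ i * (ENNReal.ofReal (g x) * (1 + G x)) := mul_le_mul_right (hw _ x hx) _
      _ = (1 + G x) ^ (i + 1) * ENNReal.ofReal (g x) := by ring

end PAuxE

structure IsSeparatingPair (I : Set ℝ) (g h : ℝ → ℝ) : Prop where
  isGauge_left : IsGauge I fun _ => g
  isGauge_right : IsGauge I fun _ => h
  leftLIntegral_left_ne_top : ∀ x ∈ I, leftLIntegral I g x ≠ ⊤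
  ofReal_mul_leftLIntegral_le : ∀ x ∈ I,
    ENNReal.ofReal (h x) * leftLIntegral I g x ≤ ENNReal.ofReal (g x)
  leftLIntegral_right_eq_top : ∀ x ∈ I, leftLIntegral I h x = ⊤

open Classical in
def gaugeOf (M : Set ℕ) (g h : ℝ → ℝ) : ℕ → ℝ → ℝ := fun i => if i ∈ M then g else h

namespace IsSeparatingPair

variable {I : Set ℝ} {g h : ℝ → ℝ} {M : Set ℕ}

lemma isGauge (hgh : IsSeparatingPair I g h) (M : Set ℕ) : IsGauge I (gaugeOf M g h) := by
  intro i
  unfold gaugeOf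
  split_ifs
  · exact hgh.isGauge_left i
  · exact hgh.isGauge_right i

lemma pE_ne_top (hgh : IsSeparatingPair I g h) (hI : MeasurableSet I) {j m : ℕ} (hm : m ∈ M) :
    ∀ x ∈ I, pE (gaugeOf M g h) I j m x ≠ ⊤ := by
  have hw : ∀ i, ∀ x ∈ I, ENNReal.ofReal (gaugeOf M g h i x) * leftLIntegral I g x ≤
      ENNReal.ofReal (g x) * (1 + leftLIntegral I g x) := by
    intro i x hx
    unfold gaugeOf
    split_ifs
    · gcongr
      exact le_add_self
    · exact (hgh.ofReal_mul_leftLIntegral_le x hx).trans (le_mul_of_one_le_right' le_self_add)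
  intro x hx
  refine ne_top_of_le_ne_top ?_
    (pAuxE_le_one_add_pow_mul hI hgh.leftLIntegral_left_ne_top hw
      (fun u _ => by simp [gaugeOf, hm]) (m - j) x hx)
  exact ENNReal.mul_ne_top (ENNReal.pow_ne_top (ENNReal.add_ne_top.2
    ⟨ENNReal.one_ne_top, hgh.leftLIntegral_left_ne_top x hx⟩)) ENNReal.ofReal_ne_top

lemma pE_eq_top (hgh : IsSeparatingPair I g h) (hI : MeasurableSet I)
    (hvol : ∀ x ∈ I, volume (I ∩ Iio x) ≠ 0) {j m : ℕ} (hjm : j < m) (hm : m ∉ M) :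
    ∀ x ∈ I, pE (gaugeOf M g h) I j m x = ⊤ := by
  have hw : ∀ i, ∀ x ∈ I, 0 < gaugeOf M g h i x := fun i => ((hgh.isGauge M) i).1
  have hdiv : ∀ x ∈ I, leftLIntegral I (gaugeOf M g h m) x = ⊤ := by
    simpa [gaugeOf, hm] using hgh.leftLIntegral_right_eq_top
  obtain ⟨i, hi⟩ : ∃ i, m - j = i + 1 := ⟨m - j - 1, by omega⟩
  unfold pE
  rw [hi]
  exact pAuxE_succ_eq_top hI hw hvol hdiv i

lemma setOf_pE_ne_top_eq (hgh : IsSeparatingPair I g h) (hI : MeasurableSet I)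
    (hvol : ∀ x ∈ I, volume (I ∩ Iio x) ≠ 0) (hne : I.Nonempty) {j : ℕ}
    (hM : ∀ m ∈ M, j + 1 ≤ m) :
    {m : ℕ | j + 1 ≤ m ∧ ∀ x ∈ I, pE (gaugeOf M g h) I j m x ≠ ⊤} = M := by
  obtain ⟨p, hp⟩ := hne
  ext m
  refine ⟨fun ⟨hjm, hfin⟩ => ?_, fun hm => ⟨hM m hm, hgh.pE_ne_top hI hm⟩⟩
  by_contra hm
  exact hfin p hp (hgh.pE_eq_top hI hvol hjm hm p hp)

end IsSeparatingPair

lemma isGauge_const_of_continuousOn {I : Set ℝ} {f : ℝ → ℝ} (hf : ContinuousOn f I)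
    (hpos : ∀ x ∈ I, 0 < f x) : IsGauge I fun _ => f := by
  refine fun _ => ⟨hpos, hf.domRestrict.measurable, fun K hKI hK => ?_⟩
  obtain ⟨C, hC⟩ := hK.exists_bound_of_continuousOn (hf.mono hKI)
  exact ⟨C, fun x hx => (Real.norm_eq_abs _).symm.trans_le (hC x hx)⟩

section LeftEnd

variable {I : Set ℝ}

lemma exists_mem_lt_of_not_isLeast (hnomin : ¬∃ x, IsLeast I x) {x : ℝ} (hx : x ∈ I) :
    ∃ c ∈ I, c < x := by
  by_contra! h
  exact hnomin ⟨x, hx, h⟩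

lemma volume_inter_Iio_ne_zero (hI : I.OrdConnected) (hnomin : ¬∃ x, IsLeast I x) {x : ℝ}
    (hx : x ∈ I) : volume (I ∩ Iio x) ≠ 0 := by
  obtain ⟨c, hc, hcx⟩ := exists_mem_lt_of_not_isLeast hnomin hx
  have hsub : Ioo c x ⊆ I ∩ Iio x := fun u hu => ⟨hI.out hc hx ⟨hu.1.le, hu.2.le⟩, hu.2⟩
  exact ((by simpa using hcx : 0 < volume (Ioo c x)).trans_le (measure_mono hsub)).ne'

lemma csInf_lt_of_mem (hnomin : ¬∃ x, IsLeast I x) (hbdd : BddBelow I) {x : ℝ} (hx : x ∈ I) :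
    sInf I < x := by
  obtain ⟨c, hc, hcx⟩ := exists_mem_lt_of_not_isLeast hnomin hx
  exact (csInf_le hbdd hc).trans_lt hcx

lemma inter_Iio_eq_Ioo_csInf (hI : I.OrdConnected) (hnomin : ¬∃ x, IsLeast I x)
    (hbdd : BddBelow I) {x : ℝ} (hx : x ∈ I) : I ∩ Iio x = Ioo (sInf I) x := by
  ext u
  refine ⟨fun ⟨huI, hux⟩ => ⟨csInf_lt_of_mem hnomin hbdd huI, hux⟩, fun ⟨hu, hux⟩ => ?_⟩
  obtain ⟨c, hc, hcu⟩ := exists_lt_of_csInf_lt ⟨x, hx⟩ hu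
  exact ⟨hI.out hc hx ⟨hcu.le, hux.le⟩, hux⟩

lemma inter_Iio_eq_Iio (hI : I.OrdConnected) (hbdd : ¬BddBelow I) {x : ℝ} (hx : x ∈ I) :
    I ∩ Iio x = Iio x := by
  refine inter_eq_right.2 fun u hu => ?_
  obtain ⟨c, hc, hcu⟩ : ∃ c ∈ I, c < u := by
    by_contra! h
    exact hbdd ⟨u, fun y hy => h y hy⟩
  exact hI.out hc hx ⟨hcu.le, hu.le⟩

end LeftEnd

lemma lintegral_Ioo_inv_sub_eq_top {a x : ℝ} (hax : a < x) :
    ∫⁻ u in Ioo a x, ENNReal.ofReal ((u - a)⁻¹) = ⊤ := by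
  by_contra hfin
  have hint : IntegrableOn (fun u => (u - a)⁻¹) (Ioo a x) :=
    (lintegral_ofReal_ne_top_iff_integrable (by fun_prop)
      ((ae_restrict_iff' measurableSet_Ioo).2 (ae_of_all _ fun u hu =>
        inv_nonneg.2 (sub_nonneg.2 hu.1.le)))).1 hfin
  have := (intervalIntegrable_iff_integrableOn_Ioo_of_le hax.le).2 hint
  simp [intervalIntegrable_sub_inv_iff, hax.ne, hax.le] at this

lemma lintegral_Iio_exp (x : ℝ) : ∫⁻ u in Iio x, ENNReal.ofReal (Real.exp u) =
    ENNReal.ofReal (Real.exp x) := by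
  rw [setLIntegral_congr Iio_ae_eq_Iic, ← ofReal_integral_eq_lintegral_ofReal
    (integrableOn_exp_Iic x) (ae_of_all _ fun u => (Real.exp_pos u).le), integral_exp_Iic]

lemma isSeparatingPair_one_inv_sub_csInf {I : Set ℝ} (hI : I.OrdConnected)
    (hnomin : ¬∃ x, IsLeast I x) (hbdd : BddBelow I) :
    IsSeparatingPair I (fun _ => 1) fun x => (x - sInf I)⁻¹ := by
  have hpos : ∀ x ∈ I, 0 < x - sInf I := fun x hx =>
    sub_pos.2 (csInf_lt_of_mem hnomin hbdd hx)
  have hIio := fun x (hx : x ∈ I) => inter_Iio_eq_Ioo_csInf hI hnomin hbdd hx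
  have hG : ∀ x ∈ I, leftLIntegral I (fun _ => 1) x = ENNReal.ofReal (x - sInf I) := by
    intro x hx
    simp [leftLIntegral, hIio x hx]
  refine ⟨isGauge_const_of_continuousOn continuousOn_const fun _ _ => one_pos,
    isGauge_const_of_continuousOn ((continuousOn_id.sub continuousOn_const).inv₀
      fun x hx => (hpos x hx).ne') fun x hx => inv_pos.2 (hpos x hx),
    fun x hx => by simp [hG x hx], fun x hx => ?_, fun x hx => ?_⟩
  · rw [hG x hx, ← ENNReal.ofReal_mul (inv_nonneg.2 (hpos x hx).le),
      inv_mul_cancel₀ (hpos x hx).ne']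
  · rw [leftLIntegral, hIio x hx]
    exact lintegral_Ioo_inv_sub_eq_top (sub_pos.1 (hpos x hx))

lemma isSeparatingPair_exp_one {I : Set ℝ} (hI : I.OrdConnected) (hbdd : ¬BddBelow I) :
    IsSeparatingPair I Real.exp fun _ => 1 := by
  have hIio := fun x (hx : x ∈ I) => inter_Iio_eq_Iio hI hbdd hx
  have hG : ∀ x ∈ I, leftLIntegral I Real.exp x = ENNReal.ofReal (Real.exp x) := fun x hx => by
    rw [leftLIntegral, hIio x hx, lintegral_Iio_exp]
  refine ⟨isGauge_const_of_continuousOn Real.continuous_exp.continuousOn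
      fun x _ => Real.exp_pos x,
    isGauge_const_of_continuousOn continuousOn_const fun _ _ => one_pos,
    fun x hx => by simp [hG x hx], fun x hx => by simp [hG x hx], fun x hx => ?_⟩
  simp [leftLIntegral, hIio x hx]

/-- Proposition `M`: when the left endpoint `a` of `I` does not belong
to `I`, any prescribed subset `M` of `{j+1, j+2, …}` can be realized as the finiteness set
`F_{w;j∙} ∖ {j}` of the generalized polynomials `p_{a;j,m}` for a suitable gauge sequence. -/
theorem stmt_3 (I : Set ℝ) (hI : I.OrdConnected) (hIne : ∃ p ∈ I, ∃ q ∈ I, p < q)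
    (hnomin : ¬∃ x, IsLeast I x)
    (j : ℕ) (M : Set ℕ) (hM : ∀ m ∈ M, j + 1 ≤ m) :
    ∃ w : ℕ → ℝ → ℝ, IsGauge I w ∧
      {m : ℕ | j + 1 ≤ m ∧ ∀ x ∈ I, pE w I j m x ≠ ⊤} = M := by
  obtain ⟨p, hp, -⟩ := hIne
  have hvol : ∀ x ∈ I, volume (I ∩ Iio x) ≠ 0 := fun x hx =>
    volume_inter_Iio_ne_zero hI hnomin hx
  have realize : ∀ {g h : ℝ → ℝ}, IsSeparatingPair I g h → ∃ w : ℕ → ℝ → ℝ, IsGauge I w ∧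
      {m : ℕ | j + 1 ≤ m ∧ ∀ x ∈ I, pE w I j m x ≠ ⊤} = M := fun hgh =>
    ⟨_, hgh.isGauge M, hgh.setOf_pE_ne_top_eq hI.measurableSet hvol ⟨p, hp⟩ hM⟩
  by_cases hbdd : BddBelow I
  · exact realize (isSeparatingPair_one_inv_sub_csInf hI hnomin hbdd)
  · exact realize (isSeparatingPair_exp_one hI hbdd)

end
end

section
/- Let n ≥ 0, let i ∈ {0, …, n}, and let μ be a nonnegative Borel measure on I with μ(I ∩ {b}) = 0 such that h_{j;μ}(x) < ∞ for all j ∈ {i, …, n} and all x ∈ I. Then the function h_{i;μ}/w_i is nondecreasing on I (hence locally bounded) and of class LD; moreover, if i < n, then h_{i;μ}(x)/w_i(x) = h_{i;μ}(z)/w_i(z) + ∫_z^x h_{i+1;μ}(u) du for all x, z ∈ I. -/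
/-!
Tonelli's theorem turns the recursion `p_{t;i,n}(x) = w_i(x) ∫_t^x p_{t;i+1,n}` into
`h_{i;μ}(x) = w_i(x) ∫_{I ∩ (-∞, x]} h_{i+1;μ}` for `i < n`, while
`h_{n;μ}(x) = w_n(x) μ(I ∩ (-∞, x])`. Hence `h_{i;μ} / w_i` is the distribution function
`x ↦ ν (-∞, x]` of a measure `ν` (the density `h_{i+1;μ}` on `I`, resp. `μ` restricted to `I`)
that is finite on `(-∞, x]` for `x ∈ I`. Such a function is nondecreasing and right-continuous,
and it is left-continuous wherever `ν` has no atom. The gauge functions are only measurable on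
`I`, so they are first replaced by measurable functions that agree with them on `I`; this does
not change `p_{t;j,n}` on `I`.
-/

open MeasureTheory Set Filter
open scoped ENNReal

noncomputable section

open Topology

theorem MonotoneOn.exists_abs_le_of_isCompact {I K : Set ℝ} {f : ℝ → ℝ} (hf : MonotoneOn f I)
    (hKI : K ⊆ I) (hK : IsCompact K) : ∃ C, ∀ x ∈ K, |f x| ≤ C := by
  rcases K.eq_empty_or_nonempty with rfl | hne
  · exact ⟨0, by simp⟩
  obtain ⟨a, haK, ha⟩ := hK.exists_isLeast hne
  obtain ⟨b, hbK, hb⟩ := hK.exists_isGreatest hne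
  exact ⟨max |f a| |f b|, fun x hx => abs_le_max_abs_abs
    (hf (hKI haK) (hKI hx) (ha hx)) (hf (hKI hx) (hKI hbK) (hb hx))⟩

theorem IsLD.congr {I : Set ℝ} {f g : ℝ → ℝ} (hf : IsLD I f) (hfg : EqOn f g I) : IsLD I g := by
  refine ⟨fun x hx hlt => ?_, fun x hx htop => ?_⟩
  · rw [← hfg hx]
    exact (hf.1 x hx hlt).congr' (eventually_nhdsWithin_of_forall fun z hz => hfg hz.1)
  · rw [← hfg hx]
    exact (hf.2 x hx htop).congr' (eventually_nhdsWithin_of_forall fun z hz => hfg hz.1)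

section DistributionFunction

variable (ν : Measure ℝ)

theorem tendsto_measure_Iic_nhdsGT {x y : ℝ} (hxy : x < y) (hy : ν (Iic y) ≠ ∞) :
    Tendsto (fun z => ν (Iic z)) (𝓝[>] x) (𝓝 (ν (Iic x))) := by
  have hInter : ⋂ r > x, Iic r = Iic x := by
    ext z
    simp only [mem_iInter, mem_Iic]
    exact ⟨fun h => le_of_forall_gt_imp_ge_of_dense h, fun h r hr => h.trans hr.le⟩
  rw [← hInter]
  exact tendsto_measure_biInter_gt (fun r _ => measurableSet_Iic.nullMeasurableSet)
    (fun _ _ _ hij => Iic_subset_Iic.2 hij) ⟨y, hxy, hy⟩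

theorem tendsto_measure_Iic_nhdsLT {x : ℝ} (hx : ν {x} = 0) :
    Tendsto (fun z => ν (Iic z)) (𝓝[<] x) (𝓝 (ν (Iic x))) := by
  have hUnion : ⋃ z : Iio x, Iic (z : ℝ) = Iio x := by
    ext z
    simp only [mem_iUnion, mem_Iic, mem_Iio, Subtype.exists, exists_prop]
    exact ⟨fun ⟨r, hr, hzr⟩ => hzr.trans_lt hr, fun h => ⟨z, h, le_rfl⟩⟩
  have hlim := tendsto_measure_iUnion_atTop (μ := ν) (s := fun z : Iio x => Iic (z : ℝ))
    fun _ _ h => Iic_subset_Iic.2 h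
  rw [hUnion, measure_congr (Iio_ae_eq_Iic' hx)] at hlim
  rwa [← map_coe_Iio_atTop, tendsto_map'_iff]

theorem monotoneOn_toReal_measure_Iic {I : Set ℝ} (hfin : ∀ x ∈ I, ν (Iic x) ≠ ∞) :
    MonotoneOn (fun x => (ν (Iic x)).toReal) I := fun _ _ _ hb hab =>
  ENNReal.toReal_mono (hfin _ hb) (measure_mono (Iic_subset_Iic.2 hab))

theorem isLD_toReal_measure_Iic {I : Set ℝ} (hfin : ∀ x ∈ I, ν (Iic x) ≠ ∞)
    (hatom : ∀ x ∈ I, (∀ y ∈ I, y ≤ x) → ν {x} = 0) :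
    IsLD I (fun x => (ν (Iic x)).toReal) := by
  refine ⟨fun x hx ⟨y, hy, hxy⟩ => ?_, fun x hx htop => ?_⟩
  · exact ((ENNReal.tendsto_toReal (hfin x hx)).comp
      (tendsto_measure_Iic_nhdsGT ν hxy (hfin y hy))).mono_left
      (nhdsWithin_mono x inter_subset_right)
  · exact ((ENNReal.tendsto_toReal (hfin x hx)).comp
      (tendsto_measure_Iic_nhdsLT ν (hatom x hx htop))).mono_left
      (nhdsWithin_mono x inter_subset_right)

end DistributionFunction

theorem measurable_setIntegral_Ioc_of_uncurry {α : Type*} [MeasurableSpace α] {F : α → ℝ → ℝ}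
    (hF : Measurable (Function.uncurry F)) {a b : α → ℝ} (ha : Measurable a)
    (hb : Measurable b) : Measurable fun p => ∫ u in Ioc (a p) (b p), F p u := by
  have hset : MeasurableSet {q : α × ℝ | q.2 ∈ Ioc (a q.1) (b q.1)} :=
    (measurableSet_lt (ha.comp measurable_fst) measurable_snd).inter
      (measurableSet_le measurable_snd (hb.comp measurable_fst))
  simp_rw [← integral_indicator measurableSet_Ioc]
  exact (hF.indicator hset).stronglyMeasurable.integral_prod_right'.measurable

theorem measurable_intervalIntegral_of_uncurry {α : Type*} [MeasurableSpace α] {F : α → ℝ → ℝ}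
    (hF : Measurable (Function.uncurry F)) {a b : α → ℝ} (ha : Measurable a)
    (hb : Measurable b) : Measurable fun p => ∫ u in a p..b p, F p u :=
  (measurable_setIntegral_Ioc_of_uncurry hF ha hb).sub
    (measurable_setIntegral_Ioc_of_uncurry hF hb ha)

theorem measurable_pAux {w : ℕ → ℝ → ℝ} (hw : ∀ j, Measurable (w j)) (m k : ℕ) :
    Measurable fun p : ℝ × ℝ => pAux w p.1 m k p.2 := by
  induction k with
  | zero => exact (hw m).comp measurable_snd
  | succ k ih =>
    exact ((hw _).comp measurable_snd).mul <|
      measurable_intervalIntegral_of_uncurry (F := fun (p : ℝ × ℝ) u => pAux w p.1 m k u)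
        (ih.comp (measurable_fst.fst.prodMk measurable_snd)) measurable_fst measurable_snd

theorem pAux_nonneg {I : Set ℝ} (hI : I.OrdConnected) {w : ℕ → ℝ → ℝ}
    (hw : ∀ j, ∀ x ∈ I, 0 ≤ w j x) (m k : ℕ) {t : ℝ} (ht : t ∈ I) :
    ∀ u ∈ I, t ≤ u → 0 ≤ pAux w t m k u := by
  induction k with
  | zero => exact fun u hu _ => hw m u hu
  | succ k ih =>
    exact fun u hu htu => mul_nonneg (hw _ u hu) <| intervalIntegral.integral_nonneg htu
      fun v hv => ih v (hI.out ht hu hv) hv.1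

theorem exists_abs_pAux_le {w : ℕ → ℝ → ℝ} {t x : ℝ} (htx : t ≤ x)
    (hw : ∀ j, ∃ C, ∀ u ∈ Icc t x, |w j u| ≤ C) (m k : ℕ) :
    ∃ C, ∀ u ∈ Icc t x, |pAux w t m k u| ≤ C := by
  induction k with
  | zero => exact hw m
  | succ k ih =>
    obtain ⟨C, hC⟩ := ih
    obtain ⟨D, hD⟩ := hw (m - (k + 1))
    refine ⟨D * (C * (x - t)), fun u hu => ?_⟩
    have hint : ‖∫ v in t..u, pAux w t m k v‖ ≤ C * (x - t) := by
      calc _ ≤ C * |u - t| :=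
            intervalIntegral.norm_integral_le_of_norm_le_const fun v hv => by
              obtain ⟨hv₁, hv₂⟩ : v ∈ Ioc t u := uIoc_of_le hu.1 ▸ hv
              exact hC v ⟨hv₁.le, hv₂.trans hu.2⟩
        _ ≤ C * (x - t) := by
            have hC0 : 0 ≤ C := (abs_nonneg _).trans (hC t ⟨le_rfl, htx⟩)
            rw [abs_of_nonneg (sub_nonneg.2 hu.1)]
            exact mul_le_mul_of_nonneg_left (by linarith [hu.2]) hC0
    rw [pAux, abs_mul]
    exact mul_le_mul (hD u hu) hint (abs_nonneg _) ((abs_nonneg _).trans (hD u hu))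

theorem pAux_congr {I : Set ℝ} (hI : I.OrdConnected) {w w' : ℕ → ℝ → ℝ}
    (hww' : ∀ j, EqOn (w j) (w' j) I) (m k : ℕ) {t : ℝ} (ht : t ∈ I) :
    EqOn (pAux w t m k) (pAux w' t m k) I := by
  induction k with
  | zero => exact hww' m
  | succ k ih =>
    intro x hx
    simp only [pAux]
    rw [hww' _ hx, intervalIntegral.integral_congr fun u hu => ih (hI.uIcc_subset ht hx hu)]

theorem measurable_pplus {w : ℕ → ℝ → ℝ} (hw : ∀ j, Measurable (w j)) (j m : ℕ) :
    Measurable fun p : ℝ × ℝ => pplus w p.1 j m p.2 :=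
  Measurable.ite (measurableSet_le measurable_fst measurable_snd) (measurable_pAux hw m _)
    measurable_const

theorem pfun_self (w : ℕ → ℝ → ℝ) (t : ℝ) (n : ℕ) : pfun w t n n = w n := by
  rw [pfun, Nat.sub_self, pAux]

theorem pfun_of_lt (w : ℕ → ℝ → ℝ) (t : ℝ) {j n : ℕ} (hjn : j < n) (x : ℝ) :
    pfun w t j n x = w j x * ∫ u in t..x, pfun w t (j + 1) n u := by
  obtain ⟨k, rfl⟩ := Nat.exists_eq_add_of_lt hjn
  have hk : j + k + 1 - j = (j + k + 1 - (j + 1)) + 1 := by omega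
  have hj : j + k + 1 - ((j + k + 1 - (j + 1)) + 1) = j := by omega
  rw [pfun, hk, pAux, hj]
  rfl

theorem ofReal_pplus_eq_indicator (w : ℕ → ℝ → ℝ) (t : ℝ) (j n : ℕ) (x : ℝ) :
    ENNReal.ofReal (pplus w t j n x)
      = (Ici t).indicator (fun u => ENNReal.ofReal (pfun w t j n u)) x := by
  by_cases htx : t ≤ x <;> simp [pplus, htx]

theorem ofReal_pplus_eq_mul_setLIntegral {I : Set ℝ} (hI : I.OrdConnected) {w : ℕ → ℝ → ℝ}
    (hwm : ∀ j, Measurable (w j)) (hw : IsGauge I w) {i n : ℕ} (hin : i < n) {t x : ℝ}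
    (ht : t ∈ I) (hx : x ∈ I) :
    ENNReal.ofReal (pplus w t i n x)
      = ENNReal.ofReal (w i x) * ∫⁻ u in Iic x ∩ I, ENNReal.ofReal (pplus w t (i + 1) n u) := by
  simp_rw [ofReal_pplus_eq_indicator]
  rw [setLIntegral_indicator measurableSet_Ici]
  by_cases htx : t ≤ x
  · have hIcc : Icc t x ⊆ I := hI.out ht hx
    have hset : Ici t ∩ (Iic x ∩ I) = Icc t x := by
      rw [← inter_assoc, Ici_inter_Iic, inter_eq_left.2 hIcc]
    have hmeas : Measurable (pfun w t (i + 1) n) :=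
      (measurable_pAux hwm n _).comp (measurable_const.prodMk measurable_id)
    obtain ⟨C, hC⟩ := exists_abs_pAux_le htx (fun j => (hw j).2.2 _ hIcc isCompact_Icc) n
      (n - (i + 1))
    have hint : IntegrableOn (pfun w t (i + 1) n) (Ioc t x) :=
      Measure.integrableOn_of_bounded (M := C) measure_Ioc_lt_top.ne hmeas.aestronglyMeasurable
        (ae_restrict_of_forall_mem measurableSet_Ioc fun u hu => hC u (Ioc_subset_Icc_self hu))
    have hnn : 0 ≤ᵐ[volume.restrict (Ioc t x)] pfun w t (i + 1) n :=
      ae_restrict_of_forall_mem measurableSet_Ioc fun u hu =>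
        pAux_nonneg hI (fun j y hy => ((hw j).1 y hy).le) n _ ht u
          (hIcc (Ioc_subset_Icc_self hu)) hu.1.le
    rw [indicator_of_mem (mem_Ici.2 htx), pfun_of_lt w t hin,
      ENNReal.ofReal_mul ((hw i).1 x hx).le, hset,
      intervalIntegral.integral_of_le htx, ofReal_integral_eq_lintegral_ofReal hint hnn,
      setLIntegral_congr Ioc_ae_eq_Icc]
  · have hset : Ici t ∩ (Iic x ∩ I) = ∅ :=
      eq_empty_of_forall_notMem fun u hu => htx (hu.1.trans hu.2.1)
    rw [indicator_of_notMem (notMem_Ici.2 (not_le.1 htx)), hset, Measure.restrict_empty,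
      lintegral_zero_measure, mul_zero]

/-- The mixture `h_{j;μ}` of the paper. -/
def pplusMixture (I : Set ℝ) (w : ℕ → ℝ → ℝ) (μ : Measure ℝ) (j n : ℕ) (x : ℝ) : ℝ≥0∞ :=
  ∫⁻ t in I, ENNReal.ofReal (pplus w t j n x) ∂μ

section Mixture

variable {I : Set ℝ} {w : ℕ → ℝ → ℝ} (μ : Measure ℝ)

theorem pplusMixture_self (n : ℕ) (x : ℝ) :
    pplusMixture I w μ n n x = ENNReal.ofReal (w n x) * μ (Iic x ∩ I) := by
  have hind : ∀ t, ENNReal.ofReal (pplus w t n n x)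
      = (Iic x).indicator (fun _ => ENNReal.ofReal (w n x)) t := fun t => by
    rw [ofReal_pplus_eq_indicator, pfun_self]
    by_cases htx : t ≤ x <;> simp [htx]
  simp_rw [pplusMixture, hind]
  rw [setLIntegral_indicator measurableSet_Iic, setLIntegral_const]

theorem measurable_pplusMixture [SFinite (μ.restrict I)] (hwm : ∀ j, Measurable (w j))
    (j n : ℕ) : Measurable (pplusMixture I w μ j n) :=
  Measurable.lintegral_prod_left (f := fun t u => ENNReal.ofReal (pplus w t j n u))
    (measurable_pplus hwm j n).ennreal_ofReal

theorem pplusMixture_congr (hI : I.OrdConnected) {w' : ℕ → ℝ → ℝ}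
    (hww' : ∀ j, EqOn (w j) (w' j) I) (j n : ℕ) {x : ℝ} (hx : x ∈ I) :
    pplusMixture I w μ j n x = pplusMixture I w' μ j n x := by
  refine setLIntegral_congr_fun hI.measurableSet fun t ht => ?_
  simp only [pplus, pfun]
  split_ifs
  · rw [pAux_congr hI hww' n _ ht hx]
  · rfl

theorem pplusMixture_eq_mul_setLIntegral_of_measurable [SFinite (μ.restrict I)]
    (hI : I.OrdConnected) (hwm : ∀ j, Measurable (w j)) (hw : IsGauge I w) {i n : ℕ}
    (hin : i < n) {x : ℝ} (hx : x ∈ I) :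
    pplusMixture I w μ i n x
      = ENNReal.ofReal (w i x) * ∫⁻ u in Iic x ∩ I, pplusMixture I w μ (i + 1) n u := by
  calc pplusMixture I w μ i n x
      = ∫⁻ t in I, (ENNReal.ofReal (w i x) *
          ∫⁻ u in Iic x ∩ I, ENNReal.ofReal (pplus w t (i + 1) n u)) ∂μ :=
        setLIntegral_congr_fun hI.measurableSet fun t ht =>
          ofReal_pplus_eq_mul_setLIntegral hI hwm hw hin ht hx
    _ = ENNReal.ofReal (w i x) *
          ∫⁻ t in I, (∫⁻ u in Iic x ∩ I, ENNReal.ofReal (pplus w t (i + 1) n u)) ∂μ :=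
        lintegral_const_mul' _ _ ENNReal.ofReal_ne_top
    _ = _ := congrArg _ <| lintegral_lintegral_swap
          (measurable_pplus hwm (i + 1) n).ennreal_ofReal.aemeasurable

end Mixture

theorem IsGauge.congr {I : Set ℝ} {w w' : ℕ → ℝ → ℝ} (hw : IsGauge I w)
    (hww' : ∀ j, EqOn (w j) (w' j) I) : IsGauge I w' := by
  intro j
  obtain ⟨hpos, hmeas, hbdd⟩ := hw j
  have hsub : (fun x : I => w' j x) = fun x : I => w j x := funext fun x => (hww' j x.2).symm
  refine ⟨fun x hx => hww' j hx ▸ hpos x hx, hsub ▸ hmeas, fun K hKI hK => ?_⟩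
  obtain ⟨C, hC⟩ := hbdd K hKI hK
  exact ⟨C, fun x hx => hww' j (hKI hx) ▸ hC x hx⟩

theorem IsGauge.exists_measurable {I : Set ℝ} (hI : MeasurableSet I) {w : ℕ → ℝ → ℝ}
    (hw : IsGauge I w) : ∃ w' : ℕ → ℝ → ℝ, (∀ j, Measurable (w' j)) ∧ ∀ j, EqOn (w j) (w' j) I := by
  refine ⟨fun j => I.indicator (w j), fun j => measurable_of_restrict_of_restrict_compl hI ?_ ?_,
    fun j x hx => (indicator_of_mem hx _).symm⟩
  · convert (hw j).2.1 using 1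
    exact funext fun x => indicator_of_mem x.2 _
  · convert measurable_const (a := (0 : ℝ)) using 1
    exact funext fun x => indicator_of_notMem x.2 _

theorem sigmaFinite_restrict_of_measure_Iic_inter_ne_top {I : Set ℝ} (hI : I.OrdConnected)
    {μ : Measure ℝ} (hμ : ∀ x ∈ I, μ (Iic x ∩ I) ≠ ∞) : SigmaFinite (μ.restrict I) := by
  rcases I.eq_empty_or_nonempty with rfl | ⟨p, hp⟩
  · rw [Measure.restrict_empty]
    infer_instance
  have : Nonempty I := ⟨⟨p, hp⟩⟩
  obtain ⟨x, hx⟩ := exists_seq_tendsto (atTop : Filter I)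
  refine Measure.sigmaFinite_of_countable (S := insert Iᶜ (range fun k => Iic (x k : ℝ)))
    ((countable_range _).insert _) ?_ ?_
  · rintro s (rfl | ⟨k, rfl⟩)
    · simp [Measure.restrict_apply' hI.measurableSet]
    · rw [Measure.restrict_apply measurableSet_Iic]
      exact (hμ _ (x k).2).lt_top
  · refine eq_univ_of_forall fun y => ?_
    by_cases hy : y ∈ I
    · obtain ⟨k, hk⟩ := (hx.eventually_ge_atTop ⟨y, hy⟩).exists
      exact mem_sUnion.2 ⟨_, mem_insert_of_mem _ ⟨k, rfl⟩, (hk : y ≤ x k)⟩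
    · exact mem_sUnion.2 ⟨_, mem_insert _ _, hy⟩

theorem ne_top_of_ofReal_mul_ne_top {v : ℝ} (hv : 0 < v) {m : ℝ≥0∞}
    (h : ENNReal.ofReal v * m ≠ ∞) : m ≠ ∞ := fun hm =>
  h (by rw [hm, ENNReal.mul_top (ENNReal.ofReal_pos.2 hv).ne'])

theorem toReal_ofReal_mul_div_cancel {v : ℝ} (hv : 0 < v) (m : ℝ≥0∞) :
    (ENNReal.ofReal v * m).toReal / v = m.toReal := by
  rw [ENNReal.toReal_mul, ENNReal.toReal_ofReal hv.le, mul_div_cancel_left₀ _ hv.ne']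

theorem toReal_setLIntegral_Iic_inter_eq_add_intervalIntegral {I : Set ℝ} (hI : I.OrdConnected)
    {f : ℝ → ℝ≥0∞} (hf : AEMeasurable f (volume.restrict I))
    (hfin : ∀ x ∈ I, ∫⁻ u in Iic x ∩ I, f u ≠ ∞) {z x : ℝ} (hz : z ∈ I) (hx : x ∈ I) :
    IntervalIntegrable (fun u => (f u).toReal) volume z x ∧
      (∫⁻ u in Iic x ∩ I, f u).toReal
        = (∫⁻ u in Iic z ∩ I, f u).toReal + ∫ u in z..x, (f u).toReal := by
  have key : ∀ {a b}, a ∈ I → b ∈ I → a ≤ b →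
      IntegrableOn (fun u => (f u).toReal) (Ioc a b) ∧
        (∫⁻ u in Iic b ∩ I, f u).toReal
          = (∫⁻ u in Iic a ∩ I, f u).toReal + ∫ u in a..b, (f u).toReal := by
    intro a b ha hb hab
    have hIoc : Ioc a b ⊆ I := Ioc_subset_Icc_self.trans (hI.out ha hb)
    have hsplit : Iic b ∩ I = (Iic a ∩ I) ∪ Ioc a b :=
      Subset.antisymm
        (fun u ⟨hub, huI⟩ => (le_or_gt u a).imp (fun h => ⟨h, huI⟩) fun h => ⟨h, hub⟩)
        (union_subset (inter_subset_inter_left _ (Iic_subset_Iic.2 hab))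
          fun u hu => ⟨hu.2, hIoc hu⟩)
    have hfm : AEMeasurable f (volume.restrict (Ioc a b)) := hf.mono_set hIoc
    have hfinIoc : ∫⁻ u in Ioc a b, f u ≠ ∞ :=
      ne_top_of_le_ne_top (hfin b hb) (lintegral_mono_set (hsplit ▸ subset_union_right))
    rw [hsplit, lintegral_union measurableSet_Ioc
        ((Iic_disjoint_Ioc le_rfl).mono_left inter_subset_left),
      ENNReal.toReal_add (hfin a ha) hfinIoc, intervalIntegral.integral_of_le hab,
      integral_toReal hfm (ae_lt_top' hfm hfinIoc)]
    exact ⟨integrable_toReal_of_lintegral_ne_top hfm hfinIoc, rfl⟩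
  rcases le_total z x with hzx | hxz
  · obtain ⟨hint, heq⟩ := key hz hx hzx
    exact ⟨(intervalIntegrable_iff_integrableOn_Ioc_of_le hzx).2 hint, heq⟩
  · obtain ⟨hint, heq⟩ := key hx hz hxz
    refine ⟨((intervalIntegrable_iff_integrableOn_Ioc_of_le hxz).2 hint).symm, ?_⟩
    rw [intervalIntegral.integral_symm, heq]
    ring

section GaugeMixture

variable {I : Set ℝ} {w : ℕ → ℝ → ℝ} (μ : Measure ℝ) [SFinite (μ.restrict I)]

theorem pplusMixture_eq_mul_setLIntegral (hI : I.OrdConnected) (hw : IsGauge I w) {i n : ℕ}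
    (hin : i < n) {x : ℝ} (hx : x ∈ I) :
    pplusMixture I w μ i n x
      = ENNReal.ofReal (w i x) * ∫⁻ u in Iic x ∩ I, pplusMixture I w μ (i + 1) n u := by
  obtain ⟨w', hw'm, hww'⟩ := hw.exists_measurable hI.measurableSet
  rw [pplusMixture_congr μ hI hww' i n hx,
    pplusMixture_eq_mul_setLIntegral_of_measurable μ hI hw'm (hw.congr hww') hin hx,
    ← hww' i hx]
  exact congrArg _ <| setLIntegral_congr_fun (measurableSet_Iic.inter hI.measurableSet)
    fun u hu => (pplusMixture_congr μ hI hww' _ n hu.2).symm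

theorem aemeasurable_pplusMixture (hI : I.OrdConnected) (hw : IsGauge I w) (j n : ℕ) :
    AEMeasurable (pplusMixture I w μ j n) (volume.restrict I) := by
  obtain ⟨w', hw'm, hww'⟩ := hw.exists_measurable hI.measurableSet
  exact (measurable_pplusMixture μ hw'm j n).aemeasurable.congr <|
    ae_restrict_of_forall_mem hI.measurableSet fun x hx =>
      (pplusMixture_congr μ hI hww' j n hx).symm

theorem exists_measure_pplusMixture_eq (hI : I.OrdConnected) (hw : IsGauge I w) {i n : ℕ}
    (hi : i ≤ n) (hμb : ∀ x ∈ I, (∀ y ∈ I, y ≤ x) → μ {x} = 0) :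
    ∃ ν : Measure ℝ, (∀ x ∈ I, pplusMixture I w μ i n x = ENNReal.ofReal (w i x) * ν (Iic x)) ∧
      ∀ x ∈ I, (∀ y ∈ I, y ≤ x) → ν {x} = 0 := by
  rcases hi.lt_or_eq with hin | rfl
  · refine ⟨(volume.restrict I).withDensity (pplusMixture I w μ (i + 1) n),
      fun x hx => ?_, fun x _ _ => ?_⟩
    · rw [withDensity_apply _ measurableSet_Iic, Measure.restrict_restrict measurableSet_Iic,
        pplusMixture_eq_mul_setLIntegral μ hI hw hin hx]
    · exact withDensity_absolutelyContinuous _ _ (Measure.restrict_le_self.absolutelyContinuous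
        (measure_singleton x))
  · refine ⟨μ.restrict I, fun x _ => ?_, fun x hx htop => ?_⟩
    · rw [pplusMixture_self, Measure.restrict_apply measurableSet_Iic]
    · rw [Measure.restrict_apply (measurableSet_singleton x)]
      exact measure_mono_null inter_subset_left (hμb x hx htop)

theorem toReal_pplusMixture_div_eq_add_intervalIntegral (hI : I.OrdConnected) (hw : IsGauge I w)
    {i n : ℕ} (hin : i < n) (hfin : ∀ x ∈ I, pplusMixture I w μ i n x ≠ ∞) {z x : ℝ}
    (hz : z ∈ I) (hx : x ∈ I) :
    IntervalIntegrable (fun u => (pplusMixture I w μ (i + 1) n u).toReal) volume z x ∧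
      (pplusMixture I w μ i n x).toReal / w i x
        = (pplusMixture I w μ i n z).toReal / w i z
          + ∫ u in z..x, (pplusMixture I w μ (i + 1) n u).toReal := by
  have hrec := fun y (hy : y ∈ I) => pplusMixture_eq_mul_setLIntegral μ hI hw hin hy
  rw [hrec x hx, hrec z hz, toReal_ofReal_mul_div_cancel ((hw i).1 x hx),
    toReal_ofReal_mul_div_cancel ((hw i).1 z hz)]
  exact toReal_setLIntegral_Iic_inter_eq_add_intervalIntegral hI
    (aemeasurable_pplusMixture μ hI hw (i + 1) n)
    (fun y hy => ne_top_of_ofReal_mul_ne_top ((hw i).1 y hy) (hrec y hy ▸ hfin y hy)) hz hx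

end GaugeMixture

theorem stmt_5_general (I : Set ℝ) (hI : I.OrdConnected)
    (w : ℕ → ℝ → ℝ) (hw : IsGauge I w)
    (n i : ℕ) (hi : i ≤ n)
    (μ : Measure ℝ)
    (hμb : ∀ x ∈ I, (∀ y ∈ I, y ≤ x) → μ {x} = 0)
    (hfin : ∀ j, i ≤ j → j ≤ n → ∀ x ∈ I,
      (∫⁻ t in I, ENNReal.ofReal (pplus w t j n x) ∂μ) ≠ ⊤) :
    MonotoneOn (fun x => (∫⁻ t in I, ENNReal.ofReal (pplus w t i n x) ∂μ).toReal / w i x) I ∧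
    (∀ K ⊆ I, IsCompact K → ∃ C, ∀ x ∈ K,
      |(∫⁻ t in I, ENNReal.ofReal (pplus w t i n x) ∂μ).toReal / w i x| ≤ C) ∧
    IsLD I (fun x => (∫⁻ t in I, ENNReal.ofReal (pplus w t i n x) ∂μ).toReal / w i x) ∧
    (i < n → ∀ z ∈ I, ∀ x ∈ I,
      IntervalIntegrable
        (fun u => (∫⁻ t in I, ENNReal.ofReal (pplus w t (i + 1) n u) ∂μ).toReal) volume z x ∧
      (∫⁻ t in I, ENNReal.ofReal (pplus w t i n x) ∂μ).toReal / w i x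
        = (∫⁻ t in I, ENNReal.ofReal (pplus w t i n z) ∂μ).toReal / w i z
          + ∫ u in z..x, (∫⁻ t in I, ENNReal.ofReal (pplus w t (i + 1) n u) ∂μ).toReal) := by
  have hfin' : ∀ j, i ≤ j → j ≤ n → ∀ x ∈ I, pplusMixture I w μ j n x ≠ ∞ := hfin
  have := sigmaFinite_restrict_of_measure_Iic_inter_ne_top hI fun x hx =>
    ne_top_of_ofReal_mul_ne_top ((hw n).1 x hx) (pplusMixture_self μ n x ▸ hfin' n hi le_rfl x hx)
  obtain ⟨ν, hν, hatom⟩ := exists_measure_pplusMixture_eq μ hI hw hi hμb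
  have hνfin : ∀ x ∈ I, ν (Iic x) ≠ ∞ := fun x hx =>
    ne_top_of_ofReal_mul_ne_top ((hw i).1 x hx) (hν x hx ▸ hfin' i le_rfl hi x hx)
  have hF : EqOn (fun x => (ν (Iic x)).toReal)
      (fun x => (pplusMixture I w μ i n x).toReal / w i x) I := fun x hx => by
    dsimp only
    rw [hν x hx, toReal_ofReal_mul_div_cancel ((hw i).1 x hx)]
  have hmono := (monotoneOn_toReal_measure_Iic ν hνfin).congr hF
  exact ⟨hmono, fun K hKI hK => hmono.exists_abs_le_of_isCompact hKI hK,
    (isLD_toReal_measure_Iic ν hνfin hatom).congr hF, fun hin z hz x hx =>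
    toReal_pplusMixture_div_eq_add_intervalIntegral μ hI hw hin (hfin' i le_rfl hi) hz hx⟩

/-- Lemma `h_{i;μ}`: properties of the mixtures
`h_{i;μ}(x) = ∫_I p^+_{t;i,n}(x) μ(dt)`. -/
theorem stmt_5 (I : Set ℝ) (hI : I.OrdConnected) (hIne : ∃ p ∈ I, ∃ q ∈ I, p < q)
    (w : ℕ → ℝ → ℝ) (hw : IsGauge I w)
    (n i : ℕ) (hi : i ≤ n)
    (μ : Measure ℝ)
    (hμb : ∀ x ∈ I, (∀ y ∈ I, y ≤ x) → μ {x} = 0)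
    (hfin : ∀ j, i ≤ j → j ≤ n → ∀ x ∈ I,
      (∫⁻ t in I, ENNReal.ofReal (pplus w t j n x) ∂μ) ≠ ⊤) :
    MonotoneOn (fun x => (∫⁻ t in I, ENNReal.ofReal (pplus w t i n x) ∂μ).toReal / w i x) I ∧
    (∀ K ⊆ I, IsCompact K → ∃ C, ∀ x ∈ K,
      |(∫⁻ t in I, ENNReal.ofReal (pplus w t i n x) ∂μ).toReal / w i x| ≤ C) ∧
    IsLD I (fun x => (∫⁻ t in I, ENNReal.ofReal (pplus w t i n x) ∂μ).toReal / w i x) ∧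
    (i < n → ∀ z ∈ I, ∀ x ∈ I,
      IntervalIntegrable
        (fun u => (∫⁻ t in I, ENNReal.ofReal (pplus w t (i + 1) n u) ∂μ).toReal) volume z x ∧
      (∫⁻ t in I, ENNReal.ofReal (pplus w t i n x) ∂μ).toReal / w i x
        = (∫⁻ t in I, ENNReal.ofReal (pplus w t i n z) ∂μ).toReal / w i z
          + ∫ u in z..x, (∫⁻ t in I, ENNReal.ofReal (pplus w t (i + 1) n u) ∂μ).toReal) :=
  stmt_5_general I hI w hw n i hi μ hμb hfin
end
end

section
/- Let 1 ≤ k ≤ n+1, let f ∈ F_+^{k:n}(I), let z ∈ I, and let p be the unique w-polynomial in P^{≤k−1} with p^{(i)}(z) = f^{(i)}(z) for all i ∈ {0, …, k−1}. If k is even, then f ≥ p on all of I. If k is odd, then f ≥ p on I ∩ [z, ∞) and f ≤ p on I ∩ (−∞, z]. -/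
open MeasureTheory Set Filter
open scoped ENNReal

noncomputable section

/-- Proposition `bounds`, part I: bounding a function `f ∈ F_+^{k:n}(I)`
by the `w`-polynomial `p ∈ P^{≤k−1}` matching the generalized derivatives of `f` at `z`. -/
theorem stmt_8 (I : Set ℝ) (hI : I.OrdConnected) (hIne : ∃ p ∈ I, ∃ q ∈ I, p < q)
    (w : ℕ → ℝ → ℝ) (hw : IsGauge I w)
    (k n : ℕ) (hk : 1 ≤ k) (hkn : k ≤ n + 1)
    (f : ℝ → ℝ) (df : ℕ → ℝ → ℝ) (hf : MemF I w k n f df)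
    (z : ℝ) (hz : z ∈ I)
    (p : ℝ → ℝ) (dp : ℕ → ℝ → ℝ)
    (hp : IsGenL I w (k - 1) p dp) (hpconst : ∃ c', ∀ x ∈ I, dp (k - 1) x = c')
    (hmatch : ∀ i < k, dp i z = df i z) :
    (Even k → ∀ x ∈ I, p x ≤ f x) ∧
    (Odd k →
      (∀ x ∈ I, z ≤ x → p x ≤ f x) ∧
      (∀ x ∈ I, x ≤ z → f x ≤ p x)) := by
  obtain ⟨c', hc'⟩ := hpconst
  set e : ℕ → ℝ → ℝ := fun j x => df j x - dp j x with he
  -- main induction: sign of e (k-1-i) on both sides of z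
  have key : ∀ i, i ≤ k - 1 →
      (∀ x ∈ I, z ≤ x → 0 ≤ e (k - 1 - i) x) ∧
      (∀ x ∈ I, x ≤ z →
        (Even i → e (k - 1 - i) x ≤ 0) ∧ (Odd i → 0 ≤ e (k - 1 - i) x)) := by
    intro i
    induction i with
    | zero =>
      intro _
      have hmono := hf.2 (k - 1) le_rfl (by omega)
      have hmz : dp (k - 1) z = df (k - 1) z := hmatch (k - 1) (by omega)
      constructor
      · intro x hx hzx
        have : df (k - 1) z ≤ df (k - 1) x := hmono hz hx hzx
        have hpx : dp (k - 1) x = dp (k - 1) z := by rw [hc' x hx, hc' z hz]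
        simp only [he, Nat.sub_zero]
        rw [hpx, hmz]; linarith
      · intro x hx hxz
        refine ⟨fun _ => ?_, fun h => absurd h (by simp)⟩
        have : df (k - 1) x ≤ df (k - 1) z := hmono hx hz hxz
        have hpx : dp (k - 1) x = dp (k - 1) z := by rw [hc' x hx, hc' z hz]
        simp only [he, Nat.sub_zero]
        rw [hpx, hmz]; linarith
    | succ i ih =>
      intro hi
      obtain ⟨R, L⟩ := ih (by omega)
      have hj1 : k - 1 - i = (k - 1 - (i + 1)) + 1 := by omega
      set j := k - 1 - (i + 1) with hjdef
      rw [hj1] at R L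
      -- the integral representation of e j
      have hrep : ∀ x ∈ I, e j x = ∫ u in z..x, e (j + 1) u * w (j + 1) u := by
        intro x hx
        have hdf := hf.1.deriv_eq j (by omega) z hz x hx
        have hdp := hp.deriv_eq j (by omega) z hz x hx
        have hmz : dp j z = df j z := hmatch j (by omega)
        have hintf := hf.1.integrable j (by omega) z hz x hx
        have hintp := hp.integrable j (by omega) z hz x hx
        have hsub : ∫ u in z..x, e (j + 1) u * w (j + 1) u
            = (∫ u in z..x, df (j + 1) u * w (j + 1) u)
              - ∫ u in z..x, dp (j + 1) u * w (j + 1) u := by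
          rw [← intervalIntegral.integral_sub hintf hintp]
          congr 1; funext u; simp [he, sub_mul]
        simp only [he]
        rw [hdf, hdp, hmz, hsub]; ring
      have hIcc : ∀ x ∈ I, ∀ u ∈ Icc z x, u ∈ I := fun x hx u hu => hI.out hz hx hu
      have hIcc' : ∀ x ∈ I, ∀ u ∈ Icc x z, u ∈ I := fun x hx u hu => hI.out hx hz hu
      constructor
      · intro x hx hzx
        rw [hrep x hx]
        apply intervalIntegral.integral_nonneg hzx
        intro u hu
        have huI := hIcc x hx u hu
        exact mul_nonneg (R u huI hu.1) (le_of_lt ((hw (j + 1)).1 u huI))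
      · intro x hx hxz
        have hflip : e j x = -∫ u in x..z, e (j + 1) u * w (j + 1) u := by
          rw [hrep x hx, ← intervalIntegral.integral_symm]
        constructor
        · intro hev
          have hodd : Odd i := by
            rcases Nat.even_or_odd i with h | h
            · exact absurd (h.add_one) (Nat.not_odd_iff_even.mpr hev)
            · exact h
          have : 0 ≤ ∫ u in x..z, e (j + 1) u * w (j + 1) u := by
            apply intervalIntegral.integral_nonneg hxz
            intro u hu
            have huI := hIcc' x hx u hu
            exact mul_nonneg ((L u huI hu.2).2 hodd)
              (le_of_lt ((hw (j + 1)).1 u huI))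
          rw [hflip]; linarith
        · intro hod
          have hev : Even i := by
            rcases Nat.even_or_odd i with h | h
            · exact h
            · exact absurd (h.add_one) (Nat.not_even_iff_odd.mpr hod)
          have : (∫ u in x..z, e (j + 1) u * w (j + 1) u) ≤ 0 := by
            have : 0 ≤ ∫ u in x..z, -(e (j + 1) u * w (j + 1) u) := by
              apply intervalIntegral.integral_nonneg hxz
              intro u hu
              have huI := hIcc' x hx u hu
              have := mul_nonpos_of_nonpos_of_nonneg ((L u huI hu.2).1 hev)
                (le_of_lt ((hw (j + 1)).1 u huI))
              linarith
            rw [intervalIntegral.integral_neg] at this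
            linarith
          rw [hflip]; linarith
  obtain ⟨R0, L0⟩ := key (k - 1) le_rfl
  have hk0 : k - 1 - (k - 1) = 0 := by omega
  rw [hk0] at R0 L0
  have hfp : ∀ x ∈ I, f x - p x = e 0 x * w 0 x := by
    intro x hx
    rw [hf.1.base x hx, hp.base x hx]
    simp [he, sub_mul]
  constructor
  · intro hke x hx
    have hw0 : 0 < w 0 x := (hw 0).1 x hx
    have he0 : 0 ≤ e 0 x := by
      rcases le_total z x with h | h
      · exact R0 x hx h
      · refine (L0 x hx h).2 ?_
        rcases Nat.even_or_odd (k - 1) with h' | h'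
        · exfalso
          have : Odd k := by
            have : k = (k - 1) + 1 := by omega
            rw [this]; exact h'.add_one
          exact (Nat.not_odd_iff_even.mpr hke) this
        · exact h'
    nlinarith [hfp x hx]
  · intro hko
    constructor
    · intro x hx hzx
      have hw0 : 0 < w 0 x := (hw 0).1 x hx
      have he0 : 0 ≤ e 0 x := R0 x hx hzx
      nlinarith [hfp x hx]
    · intro x hx hxz
      have hw0 : 0 < w 0 x := (hw 0).1 x hx
      have hev : Even (k - 1) := by
        obtain ⟨m, hm⟩ := hko
        refine ⟨m, by omega⟩
      have he0 : e 0 x ≤ 0 := (L0 x hx hxz).1 hev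
      nlinarith [hfp x hx]

end
end

section
/- Let 1 ≤ k ≤ n, let f ∈ F_+^{k:n}(I), let z ∈ I, and let q be the unique w-polynomial in P^{≤k} with q^{(i)}(z) = f^{(i)}(z) for all i ∈ {0, …, k}. Then q ∈ P_+^{≤k}, and: if k is odd, then f ≥ q on all of I; if k is even, then f ≥ q on I ∩ [z, ∞) and f ≤ q on I ∩ (−∞, z]. -/
open MeasureTheory Set Filter
open scoped ENNReal

noncomputable section

lemma neg_integral_of_neg_on {g : ℝ → ℝ} {a b : ℝ} (hab : a < b)
    (hint : IntervalIntegrable g volume a b)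
    (hneg : ∀ u ∈ Ioo a b, g u < 0) : (∫ u in a..b, g u) < 0 := by
  have h := intervalIntegral.intervalIntegral_pos_of_pos_on hint.neg
    (fun x hx => by simpa using hneg x hx) hab
  have h2 : (∫ x in a..b, (-g) x) = -∫ u in a..b, g u := by
    simpa using intervalIntegral.integral_neg (f := g) (a := a) (b := b)
  rw [h2] at h
  linarith

/-- Proposition `bounds`, part II: for `k ≤ n`, the `w`-polynomial
`q ∈ P^{≤k}` matching the generalized derivatives of `f ∈ F_+^{k:n}(I)` at `z` lies in
`P_+^{≤k}` and bounds `f` as stated. -/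
theorem stmt_9 (I : Set ℝ) (hI : I.OrdConnected) (hIne : ∃ p ∈ I, ∃ q ∈ I, p < q)
    (w : ℕ → ℝ → ℝ) (hw : IsGauge I w)
    (k n : ℕ) (hk : 1 ≤ k) (hkn : k ≤ n)
    (f : ℝ → ℝ) (df : ℕ → ℝ → ℝ) (hf : MemF I w k n f df)
    (z : ℝ) (hz : z ∈ I)
    (q : ℝ → ℝ) (dq : ℕ → ℝ → ℝ)
    (hq : IsGenL I w k q dq) (hqconst : ∃ c', ∀ x ∈ I, dq k x = c')
    (hmatch : ∀ i ≤ k, dq i z = df i z) :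
    (∀ c', (∀ x ∈ I, dq k x = c') → 0 ≤ c') ∧
    (Odd k → ∀ x ∈ I, q x ≤ f x) ∧
    (Even k →
      (∀ x ∈ I, z ≤ x → q x ≤ f x) ∧
      (∀ x ∈ I, x ≤ z → f x ≤ q x)) := by
  obtain ⟨hfL, hfmono⟩ := hf
  have hk1k : k - 1 ≤ k := Nat.sub_le k 1
  have hmonok : MonotoneOn (df k) I := hfmono k hk1k hkn
  have hmonokm : MonotoneOn (df (k - 1)) I := hfmono (k - 1) le_rfl (hk1k.trans hkn)
  have hkm1 : k - 1 < n := lt_of_lt_of_le (Nat.sub_lt hk one_pos) hkn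
  have hkm1succ : k - 1 + 1 = k := Nat.succ_pred_eq_of_pos hk
  -- Part 1 : the leading coefficient is nonnegative
  have part1 : ∀ c', (∀ x ∈ I, dq k x = c') → 0 ≤ c' := by
    intro c' hc'
    have hck : c' = df k z := by rw [← hmatch k le_rfl, ← hc' z hz]
    by_contra hcneg
    push_neg at hcneg
    have key : ∃ α ∈ I, ∃ β ∈ I, α < β ∧ ∀ u ∈ Ioo α β, df k u < 0 := by
      by_cases hy : ∃ y ∈ I, y < z
      · obtain ⟨y, hyI, hyz⟩ := hy
        refine ⟨y, hyI, z, hz, hyz, fun u hu => ?_⟩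
        have huI : u ∈ I := hI.out hyI hz ⟨hu.1.le, hu.2.le⟩
        calc df k u ≤ df k z := hmonok huI hz hu.2.le
          _ < 0 := hck ▸ hcneg
      · push_neg at hy
        obtain ⟨p, hp, q0, hq0, hpq⟩ := hIne
        have hzy : z < q0 := lt_of_le_of_lt (hy p hp) hpq
        have hsub : Ioo z q0 ⊆ I ∩ Ioi z := fun u hu =>
          ⟨hI.out hz hq0 ⟨hu.1.le, hu.2.le⟩, hu.1⟩
        have hNB : (nhdsWithin z (Ioo z q0)).NeBot := by
          rw [← mem_closure_iff_nhdsWithin_neBot, closure_Ioo hzy.ne]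
          exact ⟨le_rfl, hzy.le⟩
        have htend : Tendsto (df k) (nhdsWithin z (Ioo z q0)) (nhds c') := by
          rcases eq_or_lt_of_le hkn with hkeq | hkn'
          · have hld := hfL.ld.1 z hz ⟨q0, hq0, hzy⟩
            rw [← hkeq] at hld
            rw [hck]
            exact hld.mono_left (nhdsWithin_mono z hsub)
          · have hgint : IntervalIntegrable (fun u => df (k + 1) u * w (k + 1) u)
                volume z q0 := hfL.integrable k hkn' z hz q0 hq0
            have hcont := intervalIntegral.continuousOn_primitive_interval'
              hgint left_mem_uIcc
            have h0 : Tendsto (fun u => ∫ x in z..u, df (k + 1) x * w (k + 1) x)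
                (nhdsWithin z (Ioo z q0)) (nhds 0) := by
              have h1 := hcont z left_mem_uIcc
              rw [ContinuousWithinAt, intervalIntegral.integral_same] at h1
              exact h1.mono_left (nhdsWithin_mono z
                (by rw [uIcc_of_le hzy.le]; exact Ioo_subset_Icc_self))
            have h2 : Tendsto (fun u => c' + ∫ x in z..u, df (k + 1) x * w (k + 1) x)
                (nhdsWithin z (Ioo z q0)) (nhds c') := by
              have h3 : Tendsto (fun _ : ℝ => c')
                  (nhdsWithin z (Ioo z q0)) (nhds c') := tendsto_const_nhds
              have := h3.add h0
              rwa [add_zero] at this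
            refine Filter.Tendsto.congr' ?_ h2
            filter_upwards [self_mem_nhdsWithin] with u hu
            have huI : u ∈ I := (hsub hu).1
            rw [hfL.deriv_eq k hkn' z hz u huI, ← hck]
        have hev : ∀ᶠ u in nhdsWithin z (Ioo z q0), df k u < 0 :=
          htend.eventually_lt_const hcneg
        obtain ⟨u₀, hu₀neg, hu₀mem⟩ := (hev.and self_mem_nhdsWithin).exists
        have hu₀I : u₀ ∈ I := (hsub hu₀mem).1
        refine ⟨z, hz, u₀, hu₀I, hu₀mem.1, fun u hu => ?_⟩
        have huI : u ∈ I := hI.out hz hu₀I ⟨hu.1.le, hu.2.le⟩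
        calc df k u ≤ df k u₀ := hmonok huI hu₀I hu.2.le
          _ < 0 := hu₀neg
    obtain ⟨α, hαI, β, hβI, hαβ, hnegint⟩ := key
    have hint : IntervalIntegrable (fun u => df (k - 1 + 1) u * w (k - 1 + 1) u)
        volume α β := hfL.integrable (k - 1) hkm1 α hαI β hβI
    rw [hkm1succ] at hint
    have hlt : (∫ u in α..β, df k u * w k u) < 0 :=
      neg_integral_of_neg_on hαβ hint (fun u hu =>
        mul_neg_of_neg_of_pos (hnegint u hu)
          ((hw k).1 u (hI.out hαI hβI ⟨hu.1.le, hu.2.le⟩)))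
    have heq := hfL.deriv_eq (k - 1) hkm1 α hαI β hβI
    rw [hkm1succ] at heq
    have hge : df (k - 1) α ≤ df (k - 1) β := hmonokm hαI hβI hαβ.le
    rw [heq] at hge
    linarith
  -- formula for the difference of derivatives
  have hdd : ∀ j, j < k → ∀ x ∈ I, df j x - dq j x =
      ∫ u in z..x, (df (j + 1) u - dq (j + 1) u) * w (j + 1) u := by
    intro j hjk x hx
    have h1 := hfL.deriv_eq j (lt_of_lt_of_le hjk hkn) z hz x hx
    have h2 := hq.deriv_eq j hjk z hz x hx
    have hint1 := hfL.integrable j (lt_of_lt_of_le hjk hkn) z hz x hx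
    have hint2 := hq.integrable j hjk z hz x hx
    have hsplit : (∫ u in z..x, (df (j + 1) u - dq (j + 1) u) * w (j + 1) u)
        = (∫ u in z..x, df (j + 1) u * w (j + 1) u)
          - ∫ u in z..x, dq (j + 1) u * w (j + 1) u := by
      rw [← intervalIntegral.integral_sub hint1 hint2]
      congr 1
      ext u
      ring
    rw [hsplit, h1, h2, hmatch j hjk.le]
    ring
  obtain ⟨c', hc'⟩ := hqconst
  -- sign of the top difference
  have hdk : ∀ x ∈ I, (z ≤ x → 0 ≤ df k x - dq k x) ∧ (x ≤ z → df k x - dq k x ≤ 0) := by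
    intro x hx
    have h1 : dq k x = df k z := by rw [hc' x hx, ← hc' z hz, hmatch k le_rfl]
    constructor
    · intro hzx
      have := hmonok hz hx hzx
      rw [h1]; linarith
    · intro hxz
      have := hmonok hx hz hxz
      rw [h1]; linarith
  -- main downward induction
  have main : ∀ i, i ≤ k →
      (Even i → ∀ x ∈ I, (z ≤ x → 0 ≤ df (k - i) x - dq (k - i) x) ∧
        (x ≤ z → df (k - i) x - dq (k - i) x ≤ 0)) ∧
      (Odd i → ∀ x ∈ I, 0 ≤ df (k - i) x - dq (k - i) x) := by
    intro i
    induction i with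
    | zero =>
      intro _
      exact ⟨fun _ => by simpa using hdk, fun h => by simp [Nat.odd_iff] at h⟩
    | succ i ih =>
      intro hik
      have hik' : i ≤ k := Nat.le_of_succ_le hik
      have hsucc : k - (i + 1) + 1 = k - i := by omega
      have hform : ∀ x ∈ I, df (k - (i + 1)) x - dq (k - (i + 1)) x =
          ∫ u in z..x, (df (k - i) u - dq (k - i) u) * w (k - i) u := by
        intro x hx
        have h := hdd (k - (i + 1)) (Nat.sub_lt hk (Nat.succ_pos i)) x hx
        rwa [hsucc] at h
      constructor
      · intro hev x hx
        have hodd : Odd i := Nat.not_even_iff_odd.mp (Nat.even_add_one.mp hev)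
        have hpos := (ih hik').2 hodd
        constructor
        · intro hzx
          rw [hform x hx]
          apply intervalIntegral.integral_nonneg hzx
          intro u hu
          have huI : u ∈ I := hI.out hz hx hu
          exact mul_nonneg (hpos u huI) ((hw (k - i)).1 u huI).le
        · intro hxz
          rw [hform x hx, intervalIntegral.integral_symm x z]
          have : 0 ≤ ∫ u in x..z, (df (k - i) u - dq (k - i) u) * w (k - i) u := by
            apply intervalIntegral.integral_nonneg hxz
            intro u hu
            have huI : u ∈ I := hI.out hx hz hu
            exact mul_nonneg (hpos u huI) ((hw (k - i)).1 u huI).le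
          linarith
      · intro hodd x hx
        have hev : Even i := by
          by_contra h
          exact (Nat.not_odd_iff_even.mpr (Nat.even_add_one.mpr h)) hodd
        have hsgn := (ih hik').1 hev
        rcases le_total z x with hzx | hxz
        · rw [hform x hx]
          apply intervalIntegral.integral_nonneg hzx
          intro u hu
          have huI : u ∈ I := hI.out hz hx hu
          exact mul_nonneg ((hsgn u huI).1 hu.1) ((hw (k - i)).1 u huI).le
        · rw [hform x hx, intervalIntegral.integral_symm x z]
          have hnn : 0 ≤ ∫ u in x..z,
              -((df (k - i) u - dq (k - i) u) * w (k - i) u) := by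
            apply intervalIntegral.integral_nonneg hxz
            intro u hu
            have huI : u ∈ I := hI.out hx hz hu
            have := mul_nonpos_of_nonpos_of_nonneg ((hsgn u huI).2 hu.2)
              ((hw (k - i)).1 u huI).le
            linarith
          rw [intervalIntegral.integral_neg] at hnn
          linarith
  refine ⟨part1, ?_, ?_⟩
  · intro hkodd x hx
    have h0 := (main k le_rfl).2 hkodd x hx
    rw [Nat.sub_self] at h0
    rw [hfL.base x hx, hq.base x hx]
    exact mul_le_mul_of_nonneg_right (by linarith) ((hw 0).1 x hx).le
  · intro hkev
    have h0 := (main k le_rfl).1 hkev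
    constructor
    · intro x hx hzx
      have h1 := ((h0 x hx).1 hzx)
      rw [Nat.sub_self] at h1
      rw [hfL.base x hx, hq.base x hx]
      exact mul_le_mul_of_nonneg_right (by linarith) ((hw 0).1 x hx).le
    · intro x hx hxz
      have h1 := ((h0 x hx).2 hxz)
      rw [Nat.sub_self] at h1
      rw [hfL.base x hx, hq.base x hx]
      exact mul_le_mul_of_nonneg_right (by linarith) ((hw 0).1 x hx).le

end
end
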